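/- arXiv:2204.10588 — 5 statements merged into one kernel-verified Lean document; each statement's English description precedes it below -/
import Mathlib

section
/- Let Ω, Σ ⊂ ℝ² be rectangular domains with 0 ∈ Σ, let p ∈ (1,∞) with Hölder conjugate p'. Suppose u_n → u strongly in L^p(Ω_Σ) and w_n ⇀ w weakly in L^{p'}(Σ). Then the valid convolutions converge strongly: u_n*w_n → u*w in L^p(Ω). -/
open MeasureTheory Filter Topology Pointwise
open scoped ENNReal

noncomputable section

/-- A rectangular domain: a nonempty open rectangle `(a,b) × (c,d)` in `ℝ²`. -/
def IsRect (S : Set (ℝ × ℝ)) : Prop :=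
  ∃ a b c d : ℝ, a < b ∧ c < d ∧ S = Set.Ioo a b ×ˢ Set.Ioo c d

/-- The valid convolution `(u * w)(x) = ∫_Σ w(y) u(x - y) dy`. -/
def vconv (S : Set (ℝ × ℝ)) (u w : ℝ × ℝ → ℝ) : ℝ × ℝ → ℝ :=
  fun x => ∫ y in S, w y * u (x - y)

/-- Hölder: the product of an `L^q` and an `L^p` function is integrable. -/
lemma holder_integrable {μ : Measure (ℝ × ℝ)} {p q : ℝ≥0∞} (hpq : 1 / p + 1 / q = 1)
    {g v : ℝ × ℝ → ℝ} (hg : MemLp g q μ) (hv : MemLp v p μ) :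
    Integrable (fun y => g y * v y) μ := by
  have h1 : (1 : ℝ≥0∞) / 1 = 1 / q + 1 / p := by
    rw [add_comm (1/q) (1/p), hpq]; simp
  have h2 : MemLp (g • v) 1 μ := hv.smul hg (hpqr := ⟨by rw [inv_one]; simpa [one_div] using h1.symm⟩)
  have h3 : (g • v) = fun y => g y * v y := by
    funext y; simp [Pi.smul_apply', smul_eq_mul]
  rw [h3] at h2
  exact memLp_one_iff_integrable.mp h2

/-- Translates of `L^p` functions restricted to subsets. -/
lemma shift_memLp {A S : Set (ℝ × ℝ)} (hS : MeasurableSet S) {p : ℝ≥0∞} {f : ℝ × ℝ → ℝ}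
    (hf : MemLp f p (volume.restrict A)) {x : ℝ × ℝ} (hx : ∀ y ∈ S, x - y ∈ A) :
    MemLp (fun y => f (x - y)) p (volume.restrict S) ∧
      eLpNorm (fun y => f (x - y)) p (volume.restrict S) ≤ eLpNorm f p (volume.restrict A) := by
  set g : ℝ × ℝ → ℝ × ℝ := fun y => x - y with hgdef
  have hinv : Function.Involutive g := fun y => by simp [hgdef]
  have hgm : Measurable g := measurable_const.sub measurable_id
  have himg_eq : g '' S = g ⁻¹' S := by
    rw [Set.image_eq_preimage_of_inverse hinv hinv]
  have himg : MeasurableSet (g '' S) := by rw [himg_eq]; exact hgm hS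
  have hvol : Measure.map g volume = volume :=
    (Measure.measurePreserving_sub_left volume x).map_eq
  have hmap : Measure.map g (volume.restrict S) = volume.restrict (g '' S) := by
    have h1 := Measure.restrict_map (μ := (volume : Measure (ℝ × ℝ))) hgm himg
    rw [hvol, Set.preimage_image_eq S hinv.injective] at h1
    exact h1.symm
  have hsub : volume.restrict (g '' S) ≤ volume.restrict A :=
    Measure.restrict_mono (by rintro z ⟨y, hy, rfl⟩; exact hx y hy) le_rfl
  have haesm : AEStronglyMeasurable f (Measure.map g (volume.restrict S)) := by
    rw [hmap]; exact hf.1.mono_measure hsub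
  have heq : eLpNorm (fun y => f (x - y)) p (volume.restrict S)
      = eLpNorm f p (Measure.map g (volume.restrict S)) :=
    (eLpNorm_map_measure haesm hgm.aemeasurable).symm
  have hle : eLpNorm (fun y => f (x - y)) p (volume.restrict S)
      ≤ eLpNorm f p (volume.restrict A) := by
    rw [heq, hmap]; exact eLpNorm_mono_measure f hsub
  exact ⟨⟨haesm.comp_aemeasurable hgm.aemeasurable, hle.trans_lt hf.2⟩, hle⟩

/-- The subtraction map is quasi measure preserving on products of restricted measures. -/
lemma qmp_sub_restrict {A B C : Set (ℝ × ℝ)} (hA : MeasurableSet A) (hB : MeasurableSet B)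
    (hC : MeasurableSet C) (hsub : ∀ x ∈ A, ∀ y ∈ B, x - y ∈ C) :
    Measure.QuasiMeasurePreserving (fun z : (ℝ × ℝ) × (ℝ × ℝ) => z.1 - z.2)
      ((volume.restrict A).prod (volume.restrict B)) (volume.restrict C) := by
  refine ⟨measurable_fst.sub measurable_snd, ?_⟩
  refine Measure.AbsolutelyContinuous.mk fun s hs h0 => ?_
  rw [Measure.restrict_apply' hC] at h0
  have key : (volume.prod volume)
      ((fun z : (ℝ × ℝ) × (ℝ × ℝ) => z.1 - z.2) ⁻¹' (s ∩ C)) = 0 := by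
    have hqmp := MeasureTheory.quasiMeasurePreserving_sub (volume : Measure (ℝ × ℝ)) volume
    have h2 := hqmp.absolutelyContinuous h0
    rwa [Measure.map_apply (by fun_prop : Measurable (fun z : (ℝ × ℝ) × (ℝ × ℝ) => z.1 - z.2)) (hs.inter hC)] at h2
  rw [Measure.map_apply (by fun_prop : Measurable (fun z : (ℝ × ℝ) × (ℝ × ℝ) => z.1 - z.2)) hs, Measure.prod_restrict,
    Measure.restrict_apply' (hA.prod hB)]
  refine measure_mono_null ?_ key
  rintro ⟨z1, z2⟩ ⟨hzs, hz1, hz2⟩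
  exact ⟨hzs, hsub z1 hz1 z2 hz2⟩

/-- Pairing with a fixed `L^q` function, as a continuous linear functional on `L^p`. -/
def pairCLM {μ : Measure (ℝ × ℝ)} (p q : ℝ≥0∞) [Fact (1 ≤ p)] (hpq : 1 / p + 1 / q = 1)
    (g : ℝ × ℝ → ℝ) (hg : MemLp g q μ) : Lp ℝ p μ →L[ℝ] ℝ :=
  LinearMap.mkContinuous
    { toFun := fun v => ∫ y, g y * v y ∂μ
      map_add' := fun v1 v2 => by
        show (∫ y, g y * ((v1 + v2 : Lp ℝ p μ) : ℝ × ℝ → ℝ) y ∂μ)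
          = (∫ y, g y * ((v1 : Lp ℝ p μ) : ℝ × ℝ → ℝ) y ∂μ)
            + ∫ y, g y * ((v2 : Lp ℝ p μ) : ℝ × ℝ → ℝ) y ∂μ
        have h1 : ∫ y, g y * ((v1 + v2 : Lp ℝ p μ) : ℝ × ℝ → ℝ) y ∂μ
            = ∫ y, (g y * v1 y + g y * v2 y) ∂μ := by
          refine integral_congr_ae ?_
          filter_upwards [Lp.coeFn_add v1 v2] with y hy
          rw [hy, Pi.add_apply, mul_add]
        rw [h1, integral_add (holder_integrable hpq hg (Lp.memLp v1))
          (holder_integrable hpq hg (Lp.memLp v2))]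
      map_smul' := fun c v => by
        show (∫ y, g y * ((c • v : Lp ℝ p μ) : ℝ × ℝ → ℝ) y ∂μ)
          = (RingHom.id ℝ) c • ∫ y, g y * ((v : Lp ℝ p μ) : ℝ × ℝ → ℝ) y ∂μ
        have h1 : ∫ y, g y * ((c • v : Lp ℝ p μ) : ℝ × ℝ → ℝ) y ∂μ
            = ∫ y, c * (g y * v y) ∂μ := by
          refine integral_congr_ae ?_
          filter_upwards [Lp.coeFn_smul c v] with y hy
          rw [hy, Pi.smul_apply, smul_eq_mul]; ring
        rw [h1, integral_const_mul]
        simp [smul_eq_mul] }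
    (eLpNorm g q μ).toReal
    (fun v => by
      have h2' : (g • ((v : Lp ℝ p μ) : ℝ × ℝ → ℝ)) = fun y => g y * v y := by
        funext y; simp [Pi.smul_apply', smul_eq_mul]
      have h1 : (‖∫ y, g y * v y ∂μ‖₊ : ℝ≥0∞)
          ≤ eLpNorm g q μ * eLpNorm ((v : Lp ℝ p μ) : ℝ × ℝ → ℝ) p μ := by
        refine (enorm_integral_le_lintegral_enorm _).trans ?_
        calc ∫⁻ y, (‖g y * v y‖₊ : ℝ≥0∞) ∂μ
            = eLpNorm (g • ((v : Lp ℝ p μ) : ℝ × ℝ → ℝ)) 1 μ := by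
              rw [eLpNorm_one_eq_lintegral_enorm, h2']; rfl
          _ ≤ _ := eLpNorm_smul_le_mul_eLpNorm (Lp.aestronglyMeasurable v) hg.1
              (hpqr := ⟨by rw [inv_one, add_comm]; simpa [one_div] using hpq⟩)
      calc ‖∫ y, g y * v y ∂μ‖ = ((‖∫ y, g y * v y ∂μ‖₊ : ℝ≥0∞)).toReal := by simp
        _ ≤ (eLpNorm g q μ * eLpNorm ((v : Lp ℝ p μ) : ℝ × ℝ → ℝ) p μ).toReal :=
            ENNReal.toReal_mono (ENNReal.mul_ne_top hg.2.ne (Lp.eLpNorm_ne_top v)) h1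
        _ = (eLpNorm g q μ).toReal * ‖v‖ := by
            rw [ENNReal.toReal_mul, Lp.norm_def])

lemma pairCLM_apply {μ : Measure (ℝ × ℝ)} (p q : ℝ≥0∞) [Fact (1 ≤ p)] (hpq : 1 / p + 1 / q = 1)
    (g : ℝ × ℝ → ℝ) (hg : MemLp g q μ) {v : ℝ × ℝ → ℝ} (hv : MemLp v p μ) :
    pairCLM p q hpq g hg (hv.toLp v) = ∫ y, g y * v y ∂μ := by
  have h0 : pairCLM p q hpq g hg (hv.toLp v)
      = ∫ y, g y * ((hv.toLp v : Lp ℝ p μ) : ℝ × ℝ → ℝ) y ∂μ := rfl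
  rw [h0]
  refine integral_congr_ae ?_
  filter_upwards [hv.coeFn_toLp] with y hy
  rw [hy]

/-- if `u_n → u` strongly in `L^p(Ω − Σ)` and `w_n ⇀ w` weakly in
`L^{p'}(Σ)`, `p ∈ (1,∞)`, `1/p + 1/p' = 1`, then `u_n * w_n → u * w` strongly in
`L^p(Ω)`. -/
theorem stmt5
    (Ω Sig : Set (ℝ × ℝ)) (hΩ : IsRect Ω) (hSig : IsRect Sig)
    (h0 : (0 : ℝ × ℝ) ∈ Sig)
    (p q : ℝ≥0∞) (hp : 1 < p) (hptop : p ≠ ⊤) (hpq : 1 / p + 1 / q = 1)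
    (un : ℕ → ℝ × ℝ → ℝ) (u : ℝ × ℝ → ℝ)
    (wn : ℕ → ℝ × ℝ → ℝ) (w : ℝ × ℝ → ℝ)
    (hun : ∀ n, MemLp (un n) p (volume.restrict (Ω - Sig)))
    (hu : MemLp u p (volume.restrict (Ω - Sig)))
    (hwn : ∀ n, MemLp (wn n) q (volume.restrict Sig))
    (hw : MemLp w q (volume.restrict Sig))
    (hstrong : Tendsto (fun n => eLpNorm (un n - u) p (volume.restrict (Ω - Sig)))
      atTop (nhds 0))
    (hweak : ∀ v : ℝ × ℝ → ℝ, MemLp v p (volume.restrict Sig) →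
      Tendsto (fun n => ∫ x in Sig, wn n x * v x) atTop
        (nhds (∫ x in Sig, w x * v x))) :
    Tendsto
      (fun n => eLpNorm (vconv Sig (un n) (wn n) - vconv Sig u w) p
        (volume.restrict Ω)) atTop (nhds 0) := by
  classical
  haveI hfact : Fact (1 ≤ p) := ⟨hp.le⟩
  obtain ⟨a, b, c, d, hab, hcd, hΩeq⟩ := hΩ
  obtain ⟨a', b', c', d', hab', hcd', hSeq⟩ := hSig
  have hΩo : IsOpen Ω := by rw [hΩeq]; exact isOpen_Ioo.prod isOpen_Ioo
  have hSo : IsOpen Sig := by rw [hSeq]; exact isOpen_Ioo.prod isOpen_Ioo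
  have hDo : IsOpen (Ω - Sig) := hΩo.sub_right
  have hΩm : MeasurableSet Ω := hΩo.measurableSet
  have hSm : MeasurableSet Sig := hSo.measurableSet
  have hDm : MeasurableSet (Ω - Sig) := hDo.measurableSet
  have hSfin : volume Sig ≠ ⊤ := by
    rw [hSeq, Measure.volume_eq_prod, Measure.prod_prod, Real.volume_Ioo, Real.volume_Ioo]
    exact ENNReal.mul_ne_top ENNReal.ofReal_ne_top ENNReal.ofReal_ne_top
  have hxsub : ∀ x ∈ Ω, ∀ y ∈ Sig, x - y ∈ Ω - Sig := fun x hx y hy => Set.sub_mem_sub hx hy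
  have hp0 : p ≠ 0 := (lt_trans zero_lt_one hp).ne'
  set r := p.toReal with hrdef
  have hr0 : 0 < r := ENNReal.toReal_pos hp0 hptop
  have hrne : r ≠ 0 := hr0.ne'
  have hconv_eq : ∀ (f : ℝ × ℝ → ℝ) (μ : Measure (ℝ × ℝ)),
      eLpNorm f p μ = (∫⁻ z, (‖f z‖₊ : ℝ≥0∞) ^ r ∂μ) ^ (1/r) := fun f μ =>
    eLpNorm_eq_lintegral_rpow_enorm_toReal hp0 hptop
  have hshift : ∀ (f : ℝ × ℝ → ℝ), MemLp f p (volume.restrict (Ω - Sig)) → ∀ x ∈ Ω,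
      MemLp (fun y => f (x - y)) p (volume.restrict Sig) ∧
        eLpNorm (fun y => f (x - y)) p (volume.restrict Sig)
          ≤ eLpNorm f p (volume.restrict (Ω - Sig)) :=
    fun f hf x hx => shift_memLp hSm hf (fun y hy => hxsub x hx y hy)
  have hqmp := qmp_sub_restrict hΩm hSm hDm hxsub
  -- Tonelli-type estimate
  have hton : ∀ (f : ℝ × ℝ → ℝ), MemLp f p (volume.restrict (Ω - Sig)) →
      (∫⁻ x, (∫⁻ y, (‖f (x - y)‖₊ : ℝ≥0∞) ^ r ∂(volume.restrict Sig)) ∂(volume.restrict Ω))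
        ≤ volume Sig * ∫⁻ z, (‖f z‖₊ : ℝ≥0∞) ^ r ∂(volume.restrict (Ω - Sig)) := by
    intro f hf
    have haesm2 : AEStronglyMeasurable (fun z : (ℝ × ℝ) × (ℝ × ℝ) => f (z.1 - z.2))
        ((volume.restrict Ω).prod (volume.restrict Sig)) :=
      hf.1.comp_quasiMeasurePreserving hqmp
    have hmeas : AEMeasurable
        (Function.uncurry fun x y => (‖f (x - y)‖₊ : ℝ≥0∞) ^ r)
        ((volume.restrict Ω).prod (volume.restrict Sig)) :=
      ENNReal.continuous_rpow_const.measurable.comp_aemeasurable haesm2.enorm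
    rw [lintegral_lintegral_swap hmeas]
    have hinner : ∀ y ∈ Sig, (∫⁻ x, (‖f (x - y)‖₊ : ℝ≥0∞) ^ r ∂(volume.restrict Ω))
        ≤ ∫⁻ z, (‖f z‖₊ : ℝ≥0∞) ^ r ∂(volume.restrict (Ω - Sig)) := by
      intro y hy
      set g' : ℝ × ℝ → ℝ × ℝ := fun x => x - y with hg'def
      have hg'm : Measurable g' := measurable_id.sub measurable_const
      have himg_eq : g' '' Ω = (fun z => z + y) ⁻¹' Ω := by
        ext z; constructor
        · rintro ⟨xx, hxx, rfl⟩; simpa [hg'def] using hxx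
        · intro hz; exact ⟨z + y, hz, by simp [hg'def]⟩
      have himg : MeasurableSet (g' '' Ω) := by
        rw [himg_eq]; exact hΩm.preimage (measurable_add_const y)
      have hvol' : Measure.map g' volume = volume :=
        (measurePreserving_sub_right volume y).map_eq
      have hg'inj : Function.Injective g' := fun z1 z2 h => by
        have h2 := congrArg (fun t => t + y) h
        simpa [hg'def] using h2
      have hmapr : Measure.map g' (volume.restrict Ω) = volume.restrict (g' '' Ω) := by
        have h1 := Measure.restrict_map (μ := (volume : Measure (ℝ × ℝ))) hg'm himg
        rw [hvol', Set.preimage_image_eq Ω hg'inj] at h1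
        exact h1.symm
      have hsub' : volume.restrict (g' '' Ω) ≤ volume.restrict (Ω - Sig) :=
        Measure.restrict_mono (by rintro z ⟨xx, hxx, rfl⟩; exact hxsub xx hxx y hy) le_rfl
      have haem : AEMeasurable (fun z => (‖f z‖₊ : ℝ≥0∞) ^ r)
          (Measure.map g' (volume.restrict Ω)) := by
        rw [hmapr]
        exact ENNReal.continuous_rpow_const.measurable.comp_aemeasurable
          ((hf.1.mono_measure hsub').enorm)
      calc (∫⁻ x, (‖f (x - y)‖₊ : ℝ≥0∞) ^ r ∂(volume.restrict Ω))
          = ∫⁻ z, (‖f z‖₊ : ℝ≥0∞) ^ r ∂(Measure.map g' (volume.restrict Ω)) :=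
            (lintegral_map' haem hg'm.aemeasurable).symm
        _ ≤ ∫⁻ z, (‖f z‖₊ : ℝ≥0∞) ^ r ∂(volume.restrict (Ω - Sig)) := by
            rw [hmapr]; exact lintegral_mono' hsub' le_rfl
    calc (∫⁻ y, (∫⁻ x, (‖f (x - y)‖₊ : ℝ≥0∞) ^ r ∂(volume.restrict Ω)) ∂(volume.restrict Sig))
        ≤ ∫⁻ _, (∫⁻ z, (‖f z‖₊ : ℝ≥0∞) ^ r ∂(volume.restrict (Ω - Sig))) ∂(volume.restrict Sig) := by
          refine lintegral_mono_ae ?_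
          filter_upwards [ae_restrict_mem hSm] with y hy using hinner y hy
      _ = volume Sig * ∫⁻ z, (‖f z‖₊ : ℝ≥0∞) ^ r ∂(volume.restrict (Ω - Sig)) := by
          rw [lintegral_const, Measure.restrict_apply_univ, mul_comm]
  -- Banach–Steinhaus
  obtain ⟨C, hC⟩ : ∃ C, ∀ n, ‖pairCLM p q hpq (wn n) (hwn n)‖ ≤ C := by
    apply banach_steinhaus
    intro v
    have ht := hweak (v : ℝ × ℝ → ℝ) (Lp.memLp v)
    obtain ⟨C, hC⟩ := ht.norm.bddAbove_range
    refine ⟨C, fun n => ?_⟩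
    have happ : pairCLM p q hpq (wn n) (hwn n) v
        = ∫ x in Sig, wn n x * (v : ℝ × ℝ → ℝ) x := rfl
    rw [happ]
    exact hC ⟨n, rfl⟩
  set M := max C ‖pairCLM p q hpq w hw‖ with hMdef
  have hM0 : 0 ≤ M := by rw [hMdef]; exact le_trans (norm_nonneg _) (le_max_right _ _)
  have hMn : ∀ n, ‖pairCLM p q hpq (wn n) (hwn n)‖ ≤ M := fun n =>
    (hC n).trans (le_max_left _ _)
  have hMw : ‖pairCLM p q hpq w hw‖ ≤ M := le_max_right _ _
  -- generic pointwise bound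
  have hgen : ∀ (g : ℝ × ℝ → ℝ) (hg : MemLp g q (volume.restrict Sig)),
      ‖pairCLM p q hpq g hg‖ ≤ M →
      ∀ (f : ℝ × ℝ → ℝ), MemLp f p (volume.restrict (Ω - Sig)) → ∀ x ∈ Ω,
      (‖vconv Sig f g x‖₊ : ℝ≥0∞)
        ≤ ENNReal.ofReal M * eLpNorm (fun y => f (x - y)) p (volume.restrict Sig) := by
    intro g hg hgM f hf x hx
    obtain ⟨hmem, hle⟩ := hshift f hf x hx
    have happ : vconv Sig f g x = pairCLM p q hpq g hg (hmem.toLp _) :=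
      (pairCLM_apply p q hpq g hg hmem).symm
    calc (‖vconv Sig f g x‖₊ : ℝ≥0∞) = ENNReal.ofReal ‖vconv Sig f g x‖ :=
          (ofReal_norm _).symm
      _ ≤ ENNReal.ofReal (M * (eLpNorm (fun y => f (x - y)) p (volume.restrict Sig)).toReal) := by
          apply ENNReal.ofReal_le_ofReal
          rw [happ]
          refine le_trans ((pairCLM p q hpq g hg).le_opNorm _) ?_
          rw [Lp.norm_toLp]
          exact mul_le_mul_of_nonneg_right hgM ENNReal.toReal_nonneg
      _ = ENNReal.ofReal M
            * ENNReal.ofReal ((eLpNorm (fun y => f (x - y)) p (volume.restrict Sig)).toReal) :=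
          ENNReal.ofReal_mul hM0
      _ = ENNReal.ofReal M * eLpNorm (fun y => f (x - y)) p (volume.restrict Sig) := by
          rw [ENNReal.ofReal_toReal hmem.2.ne]
  -- the A-term bound
  have hAbound : ∀ (g : ℝ × ℝ → ℝ) (hg : MemLp g q (volume.restrict Sig)),
      ‖pairCLM p q hpq g hg‖ ≤ M →
      ∀ (f : ℝ × ℝ → ℝ) (hf : MemLp f p (volume.restrict (Ω - Sig))),
      eLpNorm (vconv Sig f g) p (volume.restrict Ω)
        ≤ ENNReal.ofReal M * (volume Sig) ^ (1/r)
            * eLpNorm f p (volume.restrict (Ω - Sig)) := by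
    intro g hg hgM f hf
    rw [hconv_eq (vconv Sig f g) (volume.restrict Ω)]
    have hbd : (∫⁻ x, (‖vconv Sig f g x‖₊ : ℝ≥0∞) ^ r ∂(volume.restrict Ω))
        ≤ ENNReal.ofReal M ^ r
            * (volume Sig * ∫⁻ z, (‖f z‖₊ : ℝ≥0∞) ^ r ∂(volume.restrict (Ω - Sig))) := by
      have h1 : (∫⁻ x, (‖vconv Sig f g x‖₊ : ℝ≥0∞) ^ r ∂(volume.restrict Ω))
          ≤ ∫⁻ x, ENNReal.ofReal M ^ r
              * (∫⁻ y, (‖f (x - y)‖₊ : ℝ≥0∞) ^ r ∂(volume.restrict Sig))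
              ∂(volume.restrict Ω) := by
        refine lintegral_mono_ae ?_
        filter_upwards [ae_restrict_mem hΩm] with x hx
        have h3 : (‖vconv Sig f g x‖₊ : ℝ≥0∞) ^ r
            ≤ (ENNReal.ofReal M
                * eLpNorm (fun y => f (x - y)) p (volume.restrict Sig)) ^ r :=
          ENNReal.rpow_le_rpow (hgen g hg hgM f hf x hx) hr0.le
        refine h3.trans (le_of_eq ?_)
        rw [ENNReal.mul_rpow_of_nonneg _ _ hr0.le,
          hconv_eq (fun y => f (x - y)) (volume.restrict Sig),
          ← ENNReal.rpow_mul, one_div_mul_cancel hrne, ENNReal.rpow_one]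
      rw [lintegral_const_mul' _ _
        (ENNReal.rpow_ne_top_of_nonneg hr0.le ENNReal.ofReal_ne_top)] at h1
      exact h1.trans (mul_le_mul_right (hton f hf) _)
    calc (∫⁻ x, (‖vconv Sig f g x‖₊ : ℝ≥0∞) ^ r ∂(volume.restrict Ω)) ^ (1/r)
        ≤ (ENNReal.ofReal M ^ r
            * (volume Sig * ∫⁻ z, (‖f z‖₊ : ℝ≥0∞) ^ r ∂(volume.restrict (Ω - Sig)))) ^ (1/r) :=
          ENNReal.rpow_le_rpow hbd (one_div_nonneg.mpr hr0.le)
      _ = ENNReal.ofReal M * (volume Sig) ^ (1/r)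
            * eLpNorm f p (volume.restrict (Ω - Sig)) := by
          rw [ENNReal.mul_rpow_of_nonneg _ _ (one_div_nonneg.mpr hr0.le),
            ENNReal.mul_rpow_of_nonneg _ _ (one_div_nonneg.mpr hr0.le),
            ← ENNReal.rpow_mul, mul_one_div_cancel hrne, ENNReal.rpow_one,
            hconv_eq f (volume.restrict (Ω - Sig)), mul_assoc]
  -- a.e. strong measurability of valid convolutions
  have hvc_aesm : ∀ (g : ℝ × ℝ → ℝ), MemLp g q (volume.restrict Sig) →
      ∀ (f : ℝ × ℝ → ℝ), MemLp f p (volume.restrict (Ω - Sig)) →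
      AEStronglyMeasurable (vconv Sig f g) (volume.restrict Ω) := by
    intro g hg f hf
    have hsnd : Measure.QuasiMeasurePreserving (Prod.snd)
        ((volume.restrict Ω).prod (volume.restrict Sig)) (volume.restrict Sig) :=
      ⟨measurable_snd, by
        rw [Measure.map_snd_prod]; exact Measure.smul_absolutelyContinuous⟩
    have h1 : AEStronglyMeasurable (fun z : (ℝ × ℝ) × (ℝ × ℝ) => g z.2 * f (z.1 - z.2))
        ((volume.restrict Ω).prod (volume.restrict Sig)) :=
      (hg.1.comp_quasiMeasurePreserving hsnd).mul (hf.1.comp_quasiMeasurePreserving hqmp)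
    exact h1.integral_prod_right'
  -- pointwise decomposition
  have hdecomp : ∀ n, (vconv Sig (un n) (wn n) - vconv Sig u w)
      =ᵐ[volume.restrict Ω] fun x =>
        vconv Sig (fun z => un n z - u z) (wn n) x
          + (vconv Sig u (wn n) x - vconv Sig u w x) := by
    intro n
    filter_upwards [ae_restrict_mem hΩm] with x hx
    have hs1 := (hshift (un n) (hun n) x hx).1
    have hs2 := (hshift u hu x hx).1
    have i1 : Integrable (fun y => wn n y * un n (x - y)) (volume.restrict Sig) :=
      holder_integrable hpq (hwn n) hs1
    have i2 : Integrable (fun y => wn n y * u (x - y)) (volume.restrict Sig) :=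
      holder_integrable hpq (hwn n) hs2
    have e0 : vconv Sig (fun z => un n z - u z) (wn n) x
        = ∫ y, (wn n y * un n (x - y) - wn n y * u (x - y)) ∂(volume.restrict Sig) := by
      simp only [vconv, mul_sub]
    have e1 : vconv Sig (fun z => un n z - u z) (wn n) x
        = (∫ y, wn n y * un n (x - y) ∂(volume.restrict Sig))
            - ∫ y, wn n y * u (x - y) ∂(volume.restrict Sig) := by
      rw [e0, integral_sub i1 i2]
    have e2 : vconv Sig (un n) (wn n) x
        = ∫ y, wn n y * un n (x - y) ∂(volume.restrict Sig) := rfl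
    have e3 : vconv Sig u w x = ∫ y, w y * u (x - y) ∂(volume.restrict Sig) := rfl
    have e4 : vconv Sig u (wn n) x
        = ∫ y, wn n y * u (x - y) ∂(volume.restrict Sig) := rfl
    rw [Pi.sub_apply, e1, e2, e3, e4]
    ring
  -- pointwise convergence of the B-term
  have hBtend : ∀ x ∈ Ω, Tendsto
      (fun n => vconv Sig u (wn n) x - vconv Sig u w x) atTop (𝓝 0) := by
    intro x hx
    have hs2 := (hshift u hu x hx).1
    have ht := hweak (fun y => u (x - y)) hs2
    have h0' := ht.sub_const (∫ y in Sig, w y * u (x - y))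
    rw [sub_self] at h0'
    exact h0'
  -- the dominating function
  have hdom : ∀ n, ∀ x ∈ Ω, (‖vconv Sig u (wn n) x - vconv Sig u w x‖₊ : ℝ≥0∞) ^ r
      ≤ (2 * ENNReal.ofReal M) ^ r
          * ∫⁻ y, (‖u (x - y)‖₊ : ℝ≥0∞) ^ r ∂(volume.restrict Sig) := by
    intro n x hx
    have h1 := hgen (wn n) (hwn n) (hMn n) u hu x hx
    have h2 := hgen w hw hMw u hu x hx
    have h3 : (‖vconv Sig u (wn n) x - vconv Sig u w x‖₊ : ℝ≥0∞)
        ≤ 2 * ENNReal.ofReal M * eLpNorm (fun y => u (x - y)) p (volume.restrict Sig) := by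
      calc (‖vconv Sig u (wn n) x - vconv Sig u w x‖₊ : ℝ≥0∞)
          ≤ (‖vconv Sig u (wn n) x‖₊ : ℝ≥0∞) + (‖vconv Sig u w x‖₊ : ℝ≥0∞) := by
            rw [← ENNReal.coe_add]
            exact ENNReal.coe_le_coe.mpr (nnnorm_sub_le _ _)
        _ ≤ ENNReal.ofReal M * eLpNorm (fun y => u (x - y)) p (volume.restrict Sig)
              + ENNReal.ofReal M * eLpNorm (fun y => u (x - y)) p (volume.restrict Sig) :=
            add_le_add h1 h2
        _ = 2 * ENNReal.ofReal M * eLpNorm (fun y => u (x - y)) p (volume.restrict Sig) := by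
            ring
    calc (‖vconv Sig u (wn n) x - vconv Sig u w x‖₊ : ℝ≥0∞) ^ r
        ≤ (2 * ENNReal.ofReal M
            * eLpNorm (fun y => u (x - y)) p (volume.restrict Sig)) ^ r :=
          ENNReal.rpow_le_rpow h3 hr0.le
      _ = (2 * ENNReal.ofReal M) ^ r
            * ∫⁻ y, (‖u (x - y)‖₊ : ℝ≥0∞) ^ r ∂(volume.restrict Sig) := by
          rw [ENNReal.mul_rpow_of_nonneg _ _ hr0.le,
            hconv_eq (fun y => u (x - y)) (volume.restrict Sig),
            ← ENNReal.rpow_mul, one_div_mul_cancel hrne, ENNReal.rpow_one]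
  have hu_lint_fin : (∫⁻ z, (‖u z‖₊ : ℝ≥0∞) ^ r ∂(volume.restrict (Ω - Sig))) ≠ ⊤ := by
    have h := hu.2
    rw [hconv_eq u (volume.restrict (Ω - Sig))] at h
    intro hcon
    rw [hcon, ENNReal.top_rpow_of_pos (one_div_pos.mpr hr0)] at h
    exact absurd h (lt_irrefl ⊤)
  have hbound_fin : (∫⁻ x, (2 * ENNReal.ofReal M) ^ r
      * (∫⁻ y, (‖u (x - y)‖₊ : ℝ≥0∞) ^ r ∂(volume.restrict Sig)) ∂(volume.restrict Ω)) ≠ ⊤ := by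
    rw [lintegral_const_mul' _ _ (ENNReal.rpow_ne_top_of_nonneg hr0.le
      (ENNReal.mul_ne_top (by simp) ENNReal.ofReal_ne_top))]
    refine ENNReal.mul_ne_top (ENNReal.rpow_ne_top_of_nonneg hr0.le
      (ENNReal.mul_ne_top (by simp) ENNReal.ofReal_ne_top)) ?_
    refine ne_top_of_le_ne_top ?_ (hton u hu)
    exact ENNReal.mul_ne_top hSfin hu_lint_fin
  have hBaesm : ∀ n, AEStronglyMeasurable
      (fun x => vconv Sig u (wn n) x - vconv Sig u w x) (volume.restrict Ω) := fun n =>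
    (hvc_aesm (wn n) (hwn n) u hu).sub (hvc_aesm w hw u hu)
  -- dominated convergence for the B-term
  have hItend : Tendsto (fun n => ∫⁻ x,
      (‖vconv Sig u (wn n) x - vconv Sig u w x‖₊ : ℝ≥0∞) ^ r ∂(volume.restrict Ω))
      atTop (𝓝 0) := by
    have h00 : (0 : ℝ≥0∞) = ∫⁻ _, (0 : ℝ≥0∞) ∂(volume.restrict Ω) := by simp
    rw [h00]
    refine tendsto_lintegral_of_dominated_convergence'
      (fun x => (2 * ENNReal.ofReal M) ^ r
        * ∫⁻ y, (‖u (x - y)‖₊ : ℝ≥0∞) ^ r ∂(volume.restrict Sig))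
      (fun n => ENNReal.continuous_rpow_const.measurable.comp_aemeasurable
        (hBaesm n).enorm)
      (fun n => by
        filter_upwards [ae_restrict_mem hΩm] with x hx using hdom n x hx)
      hbound_fin ?_
    filter_upwards [ae_restrict_mem hΩm] with x hx
    have h2 : Tendsto (fun n =>
        (‖vconv Sig u (wn n) x - vconv Sig u w x‖₊ : ℝ≥0∞)) atTop (𝓝 0) := by
      have h2' := (hBtend x hx).nnnorm
      rw [nnnorm_zero] at h2'
      exact ENNReal.tendsto_coe.mpr h2'
    have h3 := (ENNReal.continuous_rpow_const (y := r)).tendsto 0 |>.comp h2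
    rw [ENNReal.zero_rpow_of_pos hr0] at h3
    exact h3
  have hBnorm_tend : Tendsto (fun n =>
      eLpNorm (fun x => vconv Sig u (wn n) x - vconv Sig u w x) p (volume.restrict Ω))
      atTop (𝓝 0) := by
    have h := (ENNReal.continuous_rpow_const (y := 1/r)).tendsto 0 |>.comp hItend
    rw [ENNReal.zero_rpow_of_pos (one_div_pos.mpr hr0)] at h
    exact Tendsto.congr (fun n =>
      (hconv_eq (fun x => vconv Sig u (wn n) x - vconv Sig u w x)
        (volume.restrict Ω)).symm) h
  -- A-term tendsto
  have hAnorm_tend : Tendsto (fun n =>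
      eLpNorm (vconv Sig (fun z => un n z - u z) (wn n)) p (volume.restrict Ω))
      atTop (𝓝 0) := by
    have hb : ∀ n, eLpNorm (vconv Sig (fun z => un n z - u z) (wn n)) p (volume.restrict Ω)
        ≤ ENNReal.ofReal M * (volume Sig) ^ (1/r)
            * eLpNorm (un n - u) p (volume.restrict (Ω - Sig)) := fun n =>
      hAbound (wn n) (hwn n) (hMn n) (fun z => un n z - u z) ((hun n).sub hu)
    have hc : Tendsto (fun n => ENNReal.ofReal M * (volume Sig) ^ (1/r)
        * eLpNorm (un n - u) p (volume.restrict (Ω - Sig))) atTop (𝓝 0) := by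
      have h := ENNReal.Tendsto.const_mul (a := ENNReal.ofReal M * (volume Sig) ^ (1/r)) hstrong
        (Or.inr (ENNReal.mul_ne_top ENNReal.ofReal_ne_top
          (ENNReal.rpow_ne_top_of_nonneg (one_div_nonneg.mpr hr0.le) hSfin)))
      simpa using h
    exact tendsto_of_tendsto_of_tendsto_of_le_of_le tendsto_const_nhds hc
      (fun n => zero_le) hb
  -- conclude
  have hfinal : ∀ n, eLpNorm (vconv Sig (un n) (wn n) - vconv Sig u w) p (volume.restrict Ω)
      ≤ eLpNorm (vconv Sig (fun z => un n z - u z) (wn n)) p (volume.restrict Ω)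
          + eLpNorm (fun x => vconv Sig u (wn n) x - vconv Sig u w x) p (volume.restrict Ω) := by
    intro n
    rw [eLpNorm_congr_ae (hdecomp n)]
    have hAaesm : AEStronglyMeasurable (vconv Sig (fun z => un n z - u z) (wn n))
        (volume.restrict Ω) :=
      hvc_aesm (wn n) (hwn n) (fun z => un n z - u z) ((hun n).sub hu)
    exact eLpNorm_add_le hAaesm (hBaesm n) hp.le
  have hsum : Tendsto (fun n =>
      eLpNorm (vconv Sig (fun z => un n z - u z) (wn n)) p (volume.restrict Ω)
        + eLpNorm (fun x => vconv Sig u (wn n) x - vconv Sig u w x) p (volume.restrict Ω))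
      atTop (𝓝 0) := by
    simpa using hAnorm_tend.add hBnorm_tend
  exact tendsto_of_tendsto_of_tendsto_of_le_of_le tendsto_const_nhds hsum
    (fun n => zero_le) hfinal
end
end

section
/- Let Ω, Σ ⊂ ℝ² be rectangular domains with 0 ∈ Σ, let p ∈ (1,∞) with Hölder conjugate p'. Suppose u_n → u strongly in L^p(Ω_Σ) and w_n ⇀ w weakly in L^{p'}(Σ). Then the valid convolutions u_n*w_n converge to u*w uniformly on Ω. -/
open MeasureTheory Filter Topology Pointwise
open scoped ENNReal

noncomputable section

section AuxHolder

variable {α : Type*} [MeasurableSpace α] {μ : Measure α} {p q : ℝ≥0∞}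

omit [MeasurableSpace α] in
lemma aux_smul_eq {w f : α → ℝ} : (fun a => w a * f a) = w • f := by
  ext a; simp [Pi.smul_apply', smul_eq_mul]

lemma aux_holder_mem (hpq : 1 / p + 1 / q = 1) {w f : α → ℝ}
    (hw : MemLp w q μ) (hf : MemLp f p μ) :
    MemLp (fun a => w a * f a) 1 μ := by
  have hpqr : (1 : ℝ≥0∞) / 1 = 1 / q + 1 / p := by
    rw [add_comm] at hpq; simpa using hpq.symm
  rw [aux_smul_eq]
  exact hf.smul hw (hpqr := ⟨by simpa [one_div] using hpqr.symm⟩)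

lemma aux_holder_int (hpq : 1 / p + 1 / q = 1) {w f : α → ℝ}
    (hw : MemLp w q μ) (hf : MemLp f p μ) :
    Integrable (fun a => w a * f a) μ :=
  memLp_one_iff_integrable.mp (aux_holder_mem hpq hw hf)

lemma aux_holder_bound (hpq : 1 / p + 1 / q = 1) {w f : α → ℝ}
    (hw : MemLp w q μ) (hf : MemLp f p μ) :
    |∫ a, w a * f a ∂μ| ≤ (eLpNorm w q μ).toReal * (eLpNorm f p μ).toReal := by
  have hpqr : (1 : ℝ≥0∞) / 1 = 1 / q + 1 / p := by
    rw [add_comm] at hpq; simpa using hpq.symm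
  have hint := aux_holder_int hpq hw hf
  have h1 : |∫ a, w a * f a ∂μ| ≤ ∫ a, ‖w a * f a‖ ∂μ := by
    simpa [Real.norm_eq_abs] using norm_integral_le_integral_norm (fun a => w a * f a) (μ := μ)
  have h2 : ∫ a, ‖w a * f a‖ ∂μ = (eLpNorm (fun a => w a * f a) 1 μ).toReal := by
    rw [integral_norm_eq_lintegral_enorm hint.1, eLpNorm_one_eq_lintegral_enorm]
  have h3 : eLpNorm (w • f) 1 μ ≤ eLpNorm w q μ * eLpNorm f p μ :=
    eLpNorm_smul_le_mul_eLpNorm hf.1 hw.1 (hpqr := ⟨by simpa [one_div] using hpqr.symm⟩)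
  rw [← aux_smul_eq] at h3
  have h4 : (eLpNorm (fun a => w a * f a) 1 μ).toReal
      ≤ (eLpNorm w q μ).toReal * (eLpNorm f p μ).toReal := by
    rw [← ENNReal.toReal_mul]
    exact ENNReal.toReal_mono (ENNReal.mul_ne_top hw.2.ne hf.2.ne) h3
  linarith [h1, h2.le, h2.ge]

/-- The pairing `f ↦ ∫ w f` as a continuous linear map on `Lp`. -/
def pairingCLM (μ : Measure α) (p q : ℝ≥0∞) [Fact (1 ≤ p)] (hpq : 1 / p + 1 / q = 1)
    (w : α → ℝ) (hw : MemLp w q μ) : Lp ℝ p μ →L[ℝ] ℝ :=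
  LinearMap.mkContinuous
    { toFun := fun f => ∫ a, w a * f a ∂μ
      map_add' := by
        intro f g
        have h1 : (fun a => w a * ((f + g : Lp ℝ p μ) : α → ℝ) a)
            =ᵐ[μ] fun a => w a * f a + w a * g a := by
          filter_upwards [Lp.coeFn_add f g] with a ha
          rw [ha, Pi.add_apply, mul_add]
        rw [integral_congr_ae h1,
          integral_add (aux_holder_int hpq hw (Lp.memLp f)) (aux_holder_int hpq hw (Lp.memLp g))]
      map_smul' := by
        intro c f
        have h1 : (fun a => w a * ((c • f : Lp ℝ p μ) : α → ℝ) a)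
            =ᵐ[μ] fun a => c * (w a * f a) := by
          filter_upwards [Lp.coeFn_smul c f] with a ha
          rw [ha, Pi.smul_apply, smul_eq_mul]; ring
        rw [integral_congr_ae h1, MeasureTheory.integral_const_mul]
        simp }
    (eLpNorm w q μ).toReal
    (fun f => by
      simp only [LinearMap.coe_mk, AddHom.coe_mk, Real.norm_eq_abs, Lp.norm_def]
      exact aux_holder_bound hpq hw (Lp.memLp f))

lemma pairingCLM_apply (μ : Measure α) (p q : ℝ≥0∞) [Fact (1 ≤ p)] (hpq : 1 / p + 1 / q = 1)
    (w : α → ℝ) (hw : MemLp w q μ) (f : Lp ℝ p μ) :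
    pairingCLM μ p q hpq w hw f = ∫ a, w a * f a ∂μ := rfl

lemma pairingCLM_toLp (μ : Measure α) (p q : ℝ≥0∞) [Fact (1 ≤ p)] (hpq : 1 / p + 1 / q = 1)
    (w : α → ℝ) (hw : MemLp w q μ) {v : α → ℝ} (hv : MemLp v p μ) :
    pairingCLM μ p q hpq w hw (hv.toLp v) = ∫ a, w a * v a ∂μ := by
  simp only [pairingCLM, LinearMap.mkContinuous_apply, LinearMap.coe_mk, AddHom.coe_mk]
  refine integral_congr_ae ?_
  filter_upwards [hv.coeFn_toLp] with a ha
  rw [ha]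

end AuxHolder

lemma aux_translate {p : ℝ≥0∞} (x : ℝ × ℝ) (S : Set (ℝ × ℝ)) {f : ℝ × ℝ → ℝ}
    (hf : MemLp f p volume) :
    MemLp (fun y => f (x - y)) p (volume.restrict S) ∧
      eLpNorm (fun y => f (x - y)) p (volume.restrict S) ≤ eLpNorm f p volume := by
  have hmp : MeasurePreserving (fun t : ℝ × ℝ => x - t) volume volume :=
    Measure.measurePreserving_sub_left volume x
  have hcomp : MemLp (fun y => f (x - y)) p volume := hf.comp_measurePreserving hmp
  refine ⟨hcomp.restrict S, ?_⟩
  calc eLpNorm (fun y => f (x - y)) p (volume.restrict S)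
      ≤ eLpNorm (fun y => f (x - y)) p volume :=
        eLpNorm_mono_measure _ Measure.restrict_le_self
    _ = eLpNorm f p volume := eLpNorm_comp_measurePreserving hf.1 hmp

lemma aux_rect_bounded {S : Set (ℝ × ℝ)} (hS : IsRect S) : Bornology.IsBounded S := by
  obtain ⟨a, b, c, d, -, -, rfl⟩ := hS
  exact (Metric.isBounded_Ioo a b).prod (Metric.isBounded_Ioo c d)

lemma aux_rect_open {S : Set (ℝ × ℝ)} (hS : IsRect S) : IsOpen S := by
  obtain ⟨a, b, c, d, -, -, rfl⟩ := hS
  exact isOpen_Ioo.prod isOpen_Ioo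

set_option maxHeartbeats 2000000 in
/-- if `u_n → u` strongly in `L^p(Ω − Σ)` and `w_n ⇀ w` weakly in
`L^{p'}(Σ)`, `p ∈ (1,∞)`, `1/p + 1/p' = 1`, then `u_n * w_n → u * w` uniformly on `Ω`. -/
theorem stmt6
    (Ω Sig : Set (ℝ × ℝ)) (hΩ : IsRect Ω) (hSig : IsRect Sig)
    (h0 : (0 : ℝ × ℝ) ∈ Sig)
    (p q : ℝ≥0∞) (hp : 1 < p) (hptop : p ≠ ⊤) (hpq : 1 / p + 1 / q = 1)
    (un : ℕ → ℝ × ℝ → ℝ) (u : ℝ × ℝ → ℝ)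
    (wn : ℕ → ℝ × ℝ → ℝ) (w : ℝ × ℝ → ℝ)
    (hun : ∀ n, MemLp (un n) p (volume.restrict (Ω - Sig)))
    (hu : MemLp u p (volume.restrict (Ω - Sig)))
    (hwn : ∀ n, MemLp (wn n) q (volume.restrict Sig))
    (hw : MemLp w q (volume.restrict Sig))
    (hstrong : Tendsto (fun n => eLpNorm (un n - u) p (volume.restrict (Ω - Sig)))
      atTop (nhds 0))
    (hweak : ∀ v : ℝ × ℝ → ℝ, MemLp v p (volume.restrict Sig) →
      Tendsto (fun n => ∫ x in Sig, wn n x * v x) atTop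
        (nhds (∫ x in Sig, w x * v x))) :
    TendstoUniformlyOn (fun n => vconv Sig (un n) (wn n)) (vconv Sig u w) atTop Ω := by
  classical
  haveI hfact : Fact (1 ≤ p) := ⟨hp.le⟩
  have hSopen : IsOpen Sig := aux_rect_open hSig
  have hΩopen : IsOpen Ω := aux_rect_open hΩ
  have hSmeas : MeasurableSet Sig := hSopen.measurableSet
  have hOSmeas : MeasurableSet (Ω - Sig) := (hΩopen.sub_right).measurableSet
  have hSbd : Bornology.IsBounded Sig := aux_rect_bounded hSig
  have hΩbd : Bornology.IsBounded Ω := aux_rect_bounded hΩ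
  have hSvol : volume Sig < ⊤ := hSbd.measure_lt_top
  -- indicator extensions
  set U : ℝ × ℝ → ℝ := (Ω - Sig).indicator u with hUdef
  set Un : ℕ → ℝ × ℝ → ℝ := fun n => (Ω - Sig).indicator (un n) with hUndef
  have hU : MemLp U p volume := (memLp_indicator_iff_restrict hOSmeas).mpr hu
  have hUn : ∀ n, MemLp (Un n) p volume :=
    fun n => (memLp_indicator_iff_restrict hOSmeas).mpr (hun n)
  have hUnU : ∀ n, eLpNorm (Un n - U) p volume
      = eLpNorm (un n - u) p (volume.restrict (Ω - Sig)) := by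
    intro n
    have h1 : Un n - U = (Ω - Sig).indicator (un n - u) := by
      ext z
      by_cases hz : z ∈ Ω - Sig <;>
        simp [hUndef, hUdef, Set.indicator_of_mem, Set.indicator_of_notMem, hz]
    rw [h1, eLpNorm_indicator_eq_eLpNorm_restrict hOSmeas]
  -- Banach–Steinhaus
  set T : ℕ → (Lp ℝ p (volume.restrict Sig) →L[ℝ] ℝ) :=
    fun n => pairingCLM (volume.restrict Sig) p q hpq (wn n) (hwn n) with hTdef
  set Tw : Lp ℝ p (volume.restrict Sig) →L[ℝ] ℝ :=
    pairingCLM (volume.restrict Sig) p q hpq w hw with hTwdef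
  obtain ⟨C0, hC0⟩ : ∃ C0, ∀ n, ‖T n‖ ≤ C0 := by
    apply banach_steinhaus
    intro f
    have hconv := hweak (⇑f) (Lp.memLp f)
    obtain ⟨C, hC⟩ := hconv.norm.bddAbove_range
    refine ⟨C, fun n => ?_⟩
    have := hC (Set.mem_range_self (f := fun n => ‖∫ x in Sig, wn n x * f x‖) n)
    simpa [hTdef, pairingCLM_apply] using this
  have hC0nn : (0 : ℝ) ≤ C0 := le_trans (norm_nonneg _) (hC0 0)
  set K : ℝ := C0 + ‖Tw‖ + 1 with hKdef
  have hK1 : (1 : ℝ) ≤ K := by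
    have := norm_nonneg Tw; simp only [hKdef]; linarith
  have hK0 : (0 : ℝ) < K := lt_of_lt_of_le one_pos hK1
  -- key bounds
  have key1 : ∀ n (v : ℝ × ℝ → ℝ), MemLp v p (volume.restrict Sig) →
      |∫ y in Sig, wn n y * v y| ≤ K * (eLpNorm v p (volume.restrict Sig)).toReal := by
    intro n v hv
    have h1 : T n (hv.toLp v) = ∫ y in Sig, wn n y * v y :=
      pairingCLM_toLp (volume.restrict Sig) p q hpq (wn n) (hwn n) hv
    calc |∫ y in Sig, wn n y * v y| = ‖T n (hv.toLp v)‖ := by rw [h1, Real.norm_eq_abs]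
      _ ≤ ‖T n‖ * ‖hv.toLp v‖ := (T n).le_opNorm _
      _ ≤ K * (eLpNorm v p (volume.restrict Sig)).toReal := by
          rw [Lp.norm_toLp]
          have hn : ‖T n‖ ≤ K := le_trans (hC0 n) (by simp only [hKdef]; linarith [norm_nonneg Tw])
          exact mul_le_mul_of_nonneg_right hn ENNReal.toReal_nonneg
  have key2 : ∀ (v : ℝ × ℝ → ℝ), MemLp v p (volume.restrict Sig) →
      |∫ y in Sig, w y * v y| ≤ K * (eLpNorm v p (volume.restrict Sig)).toReal := by
    intro v hv
    have h1 : Tw (hv.toLp v) = ∫ y in Sig, w y * v y :=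
      pairingCLM_toLp (volume.restrict Sig) p q hpq w hw hv
    calc |∫ y in Sig, w y * v y| = ‖Tw (hv.toLp v)‖ := by rw [h1, Real.norm_eq_abs]
      _ ≤ ‖Tw‖ * ‖hv.toLp v‖ := Tw.le_opNorm _
      _ ≤ K * (eLpNorm v p (volume.restrict Sig)).toReal := by
          rw [Lp.norm_toLp]
          have hn : ‖Tw‖ ≤ K := by simp only [hKdef]; linarith [hC0nn]
          exact mul_le_mul_of_nonneg_right hn ENNReal.toReal_nonneg
  -- splitting differences of integrals
  have hsplit : ∀ n (v₁ v₂ : ℝ × ℝ → ℝ), MemLp v₁ p (volume.restrict Sig) →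
      MemLp v₂ p (volume.restrict Sig) →
      (∫ y in Sig, wn n y * v₁ y) - (∫ y in Sig, wn n y * v₂ y)
        = ∫ y in Sig, wn n y * (v₁ y - v₂ y) := by
    intro n v₁ v₂ h1 h2
    rw [← integral_sub (aux_holder_int hpq (hwn n) h1) (aux_holder_int hpq (hwn n) h2)]
    simp_rw [mul_sub]
  have hsplitw : ∀ (v₁ v₂ : ℝ × ℝ → ℝ), MemLp v₁ p (volume.restrict Sig) →
      MemLp v₂ p (volume.restrict Sig) →
      (∫ y in Sig, w y * v₁ y) - (∫ y in Sig, w y * v₂ y)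
        = ∫ y in Sig, w y * (v₁ y - v₂ y) := by
    intro v₁ v₂ h1 h2
    rw [← integral_sub (aux_holder_int hpq hw h1) (aux_holder_int hpq hw h2)]
    simp_rw [mul_sub]
  have keyd : ∀ n (v₁ v₂ : ℝ × ℝ → ℝ) (h1 : MemLp v₁ p (volume.restrict Sig))
      (h2 : MemLp v₂ p (volume.restrict Sig)),
      |(∫ y in Sig, wn n y * v₁ y) - (∫ y in Sig, wn n y * v₂ y)|
        ≤ K * (eLpNorm (fun y => v₁ y - v₂ y) p (volume.restrict Sig)).toReal := by
    intro n v₁ v₂ h1 h2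
    rw [hsplit n v₁ v₂ h1 h2]
    exact key1 n _ (h1.sub h2)
  have keydw : ∀ (v₁ v₂ : ℝ × ℝ → ℝ) (h1 : MemLp v₁ p (volume.restrict Sig))
      (h2 : MemLp v₂ p (volume.restrict Sig)),
      |(∫ y in Sig, w y * v₁ y) - (∫ y in Sig, w y * v₂ y)|
        ≤ K * (eLpNorm (fun y => v₁ y - v₂ y) p (volume.restrict Sig)).toReal := by
    intro v₁ v₂ h1 h2
    rw [hsplitw v₁ v₂ h1 h2]
    exact key2 _ (h1.sub h2)
  -- main estimate
  rw [Metric.tendstoUniformlyOn_iff]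
  intro ε hε
  set δ1 : ℝ := ε / (8 * K) with hδ1def
  have hδ1 : 0 < δ1 := div_pos hε (by linarith)
  obtain ⟨φ, hφsupp, hφnorm, hφcont, hφmem⟩ :=
    hU.exists_hasCompactSupport_eLpNorm_sub_le hptop
      (ε := ENNReal.ofReal δ1) (ENNReal.ofReal_pos.mpr hδ1).ne'
  set V' : ℝ := ((volume Sig) ^ p.toReal⁻¹).toReal with hV'def
  have hV'0 : 0 ≤ V' := ENNReal.toReal_nonneg
  set δ2 : ℝ := ε / (8 * (K * (V' + 1))) with hδ2def
  have hδ2 : 0 < δ2 := div_pos hε (by positivity)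
  have hφu : UniformContinuous φ := hφsupp.uniformContinuous_of_continuous hφcont
  obtain ⟨δ3, hδ3, hφδ⟩ := Metric.uniformContinuous_iff.mp hφu δ2 hδ2
  -- finite net
  obtain ⟨t, ht⟩ := hΩbd.isCompact_closure.elim_finite_subcover
    (fun i : ℝ × ℝ => Metric.ball i δ3) (fun i => Metric.isOpen_ball)
    (fun z _ => Set.mem_iUnion.mpr ⟨z, Metric.mem_ball_self hδ3⟩)
  -- pointwise convergence at the net points
  have hgi : ∀ᶠ n in atTop, ∀ i ∈ t,
      |(∫ y in Sig, wn n y * φ (i - y)) - ∫ y in Sig, w y * φ (i - y)| < ε / 8 := by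
    rw [eventually_all_finset]
    intro i _
    have hm := (aux_translate i Sig hφmem).1
    have h := hweak (fun y => φ (i - y)) hm
    have h2 := Metric.tendsto_nhds.mp h (ε / 8) (by positivity)
    filter_upwards [h2] with n hn
    rw [Real.dist_eq] at hn
    exact hn
  -- strong convergence term
  have hstr : ∀ᶠ n in atTop,
      K * (eLpNorm (un n - u) p (volume.restrict (Ω - Sig))).toReal < ε / 8 := by
    have h0 : Tendsto (fun n => (eLpNorm (un n - u) p (volume.restrict (Ω - Sig))).toReal)
        atTop (𝓝 0) := by
      have := (ENNReal.tendsto_toReal (a := 0) (by simp)).comp hstrong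
      exact this
    have h1 : Tendsto (fun n =>
        K * (eLpNorm (un n - u) p (volume.restrict (Ω - Sig))).toReal) atTop (𝓝 0) := by
      simpa using h0.const_mul K
    exact h1.eventually_lt_const (by positivity)
  -- arithmetic facts
  have hKδ1 : K * δ1 = ε / 8 := by
    rw [hδ1def]; field_simp
  have hKδ2 : K * (V' * δ2) ≤ ε / 8 := by
    have h2 : V' * δ2 ≤ (V' + 1) * δ2 := by nlinarith
    have h3 : K * ((V' + 1) * δ2) = ε / 8 := by
      rw [hδ2def]; field_simp
    nlinarith
  clear_value T Tw K δ1 V' δ2 U Un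
  -- conclusion
  filter_upwards [hgi, hstr] with n hgin hstrn
  intro x hx
  obtain ⟨i, hit, hxi⟩ : ∃ i ∈ t, x ∈ Metric.ball i δ3 := by
    have := ht (subset_closure hx)
    simpa using Set.mem_iUnion₂.mp this
  have hdxi : dist x i < δ3 := Metric.mem_ball.mp hxi
  -- memberships of translates
  have hUnT := aux_translate x Sig (hUn n)
  have hUT := aux_translate x Sig hU
  have hφxT := aux_translate x Sig hφmem
  have hφiT := aux_translate i Sig hφmem
  -- rewrite the convolutions via indicator extensions
  have hFn : vconv Sig (un n) (wn n) x = ∫ y in Sig, wn n y * Un n (x - y) := by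
    refine setIntegral_congr_fun hSmeas (fun y hy => ?_)
    have : x - y ∈ Ω - Sig := Set.sub_mem_sub hx hy
    simp [hUndef, Set.indicator_of_mem this]
  have hF : vconv Sig u w x = ∫ y in Sig, w y * U (x - y) := by
    refine setIntegral_congr_fun hSmeas (fun y hy => ?_)
    have : x - y ∈ Ω - Sig := Set.sub_mem_sub hx hy
    simp [hUdef, Set.indicator_of_mem this]
  rw [Real.dist_eq, hF, hFn, abs_sub_comm]
  -- the six-term estimate
  have e1 : |(∫ y in Sig, wn n y * Un n (x - y)) - ∫ y in Sig, wn n y * U (x - y)|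
      ≤ K * (eLpNorm (un n - u) p (volume.restrict (Ω - Sig))).toReal := by
    refine (keyd n _ _ hUnT.1 hUT.1).trans ?_
    refine mul_le_mul_of_nonneg_left ?_ hK0.le
    refine ENNReal.toReal_mono ((hun n).sub hu).2.ne ?_
    have hb := (aux_translate x Sig ((hUn n).sub hU)).2
    rw [hUnU n] at hb
    exact hb
  have e2 : |(∫ y in Sig, wn n y * U (x - y)) - ∫ y in Sig, wn n y * φ (x - y)|
      ≤ K * δ1 := by
    refine (keyd n _ _ hUT.1 hφxT.1).trans ?_
    refine mul_le_mul_of_nonneg_left ?_ hK0.le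
    have hb := (aux_translate x Sig (hU.sub hφmem)).2
    have hb2 : eLpNorm (fun y => U (x - y) - φ (x - y)) p (volume.restrict Sig)
        ≤ ENNReal.ofReal δ1 := hb.trans hφnorm
    calc (eLpNorm (fun y => U (x - y) - φ (x - y)) p (volume.restrict Sig)).toReal
        ≤ (ENNReal.ofReal δ1).toReal := ENNReal.toReal_mono ENNReal.ofReal_ne_top hb2
      _ = δ1 := ENNReal.toReal_ofReal hδ1.le
  have hbound_net : ∀ (z z' : ℝ × ℝ), dist z z' < δ3 →
      (eLpNorm (fun y => φ (z - y) - φ (z' - y)) p (volume.restrict Sig)).toReal ≤ V' * δ2 := by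
    intro z z' hzz
    have hpt : ∀ y : ℝ × ℝ, ‖φ (z - y) - φ (z' - y)‖ ≤ δ2 := by
      intro y
      have : dist (z - y) (z' - y) < δ3 := by rwa [dist_sub_right]
      have := hφδ this
      rw [Real.dist_eq] at this
      simpa [Real.norm_eq_abs] using this.le
    have hb := eLpNorm_le_of_ae_bound (μ := volume.restrict Sig) (p := p)
      (f := fun y => φ (z - y) - φ (z' - y)) (ae_of_all _ hpt)
    rw [Measure.restrict_apply_univ] at hb
    have hfin : volume Sig ^ p.toReal⁻¹ * ENNReal.ofReal δ2 ≠ ⊤ :=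
      ENNReal.mul_ne_top (ENNReal.rpow_ne_top_of_nonneg (by positivity) hSvol.ne)
        ENNReal.ofReal_ne_top
    calc (eLpNorm (fun y => φ (z - y) - φ (z' - y)) p (volume.restrict Sig)).toReal
        ≤ (volume Sig ^ p.toReal⁻¹ * ENNReal.ofReal δ2).toReal := ENNReal.toReal_mono hfin hb
      _ = V' * δ2 := by
          rw [ENNReal.toReal_mul, ENNReal.toReal_ofReal hδ2.le, hV'def]
  have e3 : |(∫ y in Sig, wn n y * φ (x - y)) - ∫ y in Sig, wn n y * φ (i - y)|
      ≤ K * (V' * δ2) := by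
    refine (keyd n _ _ hφxT.1 hφiT.1).trans ?_
    exact mul_le_mul_of_nonneg_left (hbound_net x i hdxi) hK0.le
  have e4 : |(∫ y in Sig, wn n y * φ (i - y)) - ∫ y in Sig, w y * φ (i - y)| < ε / 8 :=
    hgin i hit
  have e5 : |(∫ y in Sig, w y * φ (i - y)) - ∫ y in Sig, w y * φ (x - y)|
      ≤ K * (V' * δ2) := by
    refine (keydw _ _ hφiT.1 hφxT.1).trans ?_
    refine mul_le_mul_of_nonneg_left (hbound_net i x ?_) hK0.le
    rwa [dist_comm]
  have e6 : |(∫ y in Sig, w y * φ (x - y)) - ∫ y in Sig, w y * U (x - y)|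
      ≤ K * δ1 := by
    refine (keydw _ _ hφxT.1 hUT.1).trans ?_
    refine mul_le_mul_of_nonneg_left ?_ hK0.le
    have hb := (aux_translate x Sig (hU.sub hφmem)).2
    have hb2 : eLpNorm (fun y => U (x - y) - φ (x - y)) p (volume.restrict Sig)
        ≤ ENNReal.ofReal δ1 := hb.trans hφnorm
    have hcomm : eLpNorm (fun y => φ (x - y) - U (x - y)) p (volume.restrict Sig)
        = eLpNorm (fun y => U (x - y) - φ (x - y)) p (volume.restrict Sig) := by
      apply eLpNorm_congr_nnnorm_ae
      exact ae_of_all _ (fun y => by rw [← neg_sub, nnnorm_neg])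
    calc (eLpNorm (fun y => φ (x - y) - U (x - y)) p (volume.restrict Sig)).toReal
        = (eLpNorm (fun y => U (x - y) - φ (x - y)) p (volume.restrict Sig)).toReal := by
          rw [hcomm]
      _ ≤ (ENNReal.ofReal δ1).toReal := ENNReal.toReal_mono ENNReal.ofReal_ne_top hb2
      _ = δ1 := ENNReal.toReal_ofReal hδ1.le
  -- triangle inequality chain
  have t1 := abs_sub_le (∫ y in Sig, wn n y * Un n (x - y))
    (∫ y in Sig, wn n y * U (x - y)) (∫ y in Sig, w y * U (x - y))
  have t2 := abs_sub_le (∫ y in Sig, wn n y * U (x - y))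
    (∫ y in Sig, wn n y * φ (x - y)) (∫ y in Sig, w y * U (x - y))
  have t3 := abs_sub_le (∫ y in Sig, wn n y * φ (x - y))
    (∫ y in Sig, wn n y * φ (i - y)) (∫ y in Sig, w y * U (x - y))
  have t4 := abs_sub_le (∫ y in Sig, wn n y * φ (i - y))
    (∫ y in Sig, w y * φ (i - y)) (∫ y in Sig, w y * U (x - y))
  have t5 := abs_sub_le (∫ y in Sig, w y * φ (i - y))
    (∫ y in Sig, w y * φ (x - y)) (∫ y in Sig, w y * U (x - y))
  have chk1 : |(∫ y in Sig, wn n y * Un n (x - y)) - ∫ y in Sig, wn n y * U (x - y)| < ε/8 := by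
    linarith only [e1, hstrn]
  have chk2 : |(∫ y in Sig, wn n y * U (x - y)) - ∫ y in Sig, wn n y * φ (x - y)| ≤ ε/8 := by
    linarith only [e2, hKδ1.le]
  have chk3 : |(∫ y in Sig, wn n y * φ (x - y)) - ∫ y in Sig, wn n y * φ (i - y)| ≤ ε/8 := by
    linarith only [e3, hKδ2]
  have chk5 : |(∫ y in Sig, w y * φ (i - y)) - ∫ y in Sig, w y * φ (x - y)| ≤ ε/8 := by
    linarith only [e5, hKδ2]
  have chk6 : |(∫ y in Sig, w y * φ (x - y)) - ∫ y in Sig, w y * U (x - y)| ≤ ε/8 := by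
    linarith only [e6, hKδ1.le]
  linarith only [chk1, chk2, chk3, e4, chk5, chk6, t1, t2, t3, t4, t5, hε]
end
end

section
/- Let Ω, Σ ⊂ ℝ² be rectangular domains with 0 ∈ Σ, let p ∈ (1,∞) with Hölder conjugate p'. Suppose u_n → u strongly in L^p(Ω_Σ) and (w_n)_n is bounded in L^{p'}(Σ). Then the family of valid convolutions (u_n*w_n)_n is uniformly bounded and uniformly equicontinuous on cl Ω: sup_n sup_{x∈Ω} |u_n*w_n(x)| ≤ sup_n ‖u_n‖_p ‖w_n‖_{p'} < ∞, and for every ε > 0 there exists δ > 0 such that for all n and all x, x+h ∈ Ω with |h| < δ one has |u_n*w_n(x+h) − u_n*w_n(x)| ≤ ε. -/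
open MeasureTheory Filter Topology Pointwise
open scoped ENNReal

noncomputable section

namespace Stmt7Aux

/-- Transfer of a.e. equality through the map `y ↦ x - y`. -/
lemma ae_comp_sub_eq {S T : Set (ℝ × ℝ)} (hS : MeasurableSet S) (hT : MeasurableSet T)
    {u g : ℝ × ℝ → ℝ} (hug : u =ᵐ[volume.restrict T] g)
    {x : ℝ × ℝ} (hx : ∀ y ∈ S, x - y ∈ T) :
    (fun y => u (x - y)) =ᵐ[volume.restrict S] fun y => g (x - y) := by
  have hN : volume ({z | u z ≠ g z} ∩ T) = 0 := by
    have h := hug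
    rw [EventuallyEq, ae_iff, Measure.restrict_apply' hT] at h
    simpa using h
  have hpre : volume ((fun y => x - y) ⁻¹' ({z | u z ≠ g z} ∩ T)) = 0 :=
    (Measure.measurePreserving_sub_left volume x).quasiMeasurePreserving.preimage_null hN
  rw [EventuallyEq, ae_iff, Measure.restrict_apply' hS]
  refine measure_mono_null ?_ hpre
  rintro y ⟨hy1, hy2⟩
  exact ⟨hy1, hx y hy2⟩

lemma comp_aesm {S T : Set (ℝ × ℝ)} (hS : MeasurableSet S) (hT : MeasurableSet T)
    {u : ℝ × ℝ → ℝ} (hu : AEStronglyMeasurable u (volume.restrict T))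
    {x : ℝ × ℝ} (hx : ∀ y ∈ S, x - y ∈ T) :
    AEStronglyMeasurable (fun y => u (x - y)) (volume.restrict S) := by
  have hmeas : Measurable (fun y : ℝ × ℝ => x - y) := measurable_const.sub measurable_id
  have hsm : StronglyMeasurable (fun y : ℝ × ℝ => hu.mk u (x - y)) :=
    hu.stronglyMeasurable_mk.comp_measurable hmeas
  exact hsm.aestronglyMeasurable.congr (ae_comp_sub_eq hS hT hu.ae_eq_mk hx).symm

lemma comp_eLpNorm_le {S T : Set (ℝ × ℝ)} (hS : MeasurableSet S) (hT : MeasurableSet T)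
    {p : ℝ≥0∞} {u : ℝ × ℝ → ℝ} (hu : AEStronglyMeasurable u (volume.restrict T))
    {x : ℝ × ℝ} (hx : ∀ y ∈ S, x - y ∈ T) :
    eLpNorm (fun y => u (x - y)) p (volume.restrict S) ≤ eLpNorm u p (volume.restrict T) := by
  set g := hu.mk u with hg
  have hgm : StronglyMeasurable g := hu.stronglyMeasurable_mk
  calc eLpNorm (fun y => u (x - y)) p (volume.restrict S)
      = eLpNorm (fun y => g (x - y)) p (volume.restrict S) :=
        eLpNorm_congr_ae (ae_comp_sub_eq hS hT hu.ae_eq_mk hx)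
    _ ≤ eLpNorm (fun y => g (x - y)) p (volume.restrict ((fun y => x - y) ⁻¹' T)) :=
        eLpNorm_mono_measure _ (Measure.restrict_mono (fun y hy => hx y hy) le_rfl)
    _ = eLpNorm g p (volume.restrict T) := by
        have hmp := (Measure.measurePreserving_sub_left volume x).restrict_preimage_emb
          (Homeomorph.subLeft x).measurableEmbedding T
        exact eLpNorm_comp_measurePreserving hgm.aestronglyMeasurable hmp
    _ = eLpNorm u p (volume.restrict T) := (eLpNorm_congr_ae hu.ae_eq_mk).symm

/-- The basic Hölder estimate for the lintegral of the convolution integrand. -/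
lemma key0 {S T : Set (ℝ × ℝ)} (hS : MeasurableSet S) (hT : MeasurableSet T)
    {p q : ℝ≥0∞} (hpq : 1 / p + 1 / q = 1)
    {u w : ℝ × ℝ → ℝ} (hu : AEStronglyMeasurable u (volume.restrict T))
    (hw : AEStronglyMeasurable w (volume.restrict S))
    {x : ℝ × ℝ} (hx : ∀ y ∈ S, x - y ∈ T) :
    ∫⁻ y in S, ‖w y * u (x - y)‖₊ ∂volume ≤
      eLpNorm u p (volume.restrict T) * eLpNorm w q (volume.restrict S) := by
  have hcomp : AEStronglyMeasurable (fun y => u (x - y)) (volume.restrict S) :=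
    comp_aesm hS hT hu hx
  have hone : (1 : ℝ≥0∞) / 1 = 1 / q + 1 / p := by
    rw [div_one]
    exact hpq.symm.trans (add_comm _ _)
  have hHolder :
      eLpNorm (fun y => w y * u (x - y)) 1 (volume.restrict S) ≤
        eLpNorm w q (volume.restrict S) *
          eLpNorm (fun y => u (x - y)) p (volume.restrict S) :=
    by
      haveI : ENNReal.HolderTriple q p 1 := ⟨by simpa [one_div] using hone.symm⟩
      simpa using eLpNorm_le_eLpNorm_mul_eLpNorm'_of_norm (p := q) (q := p) (r := 1) hw hcomp
        (· * ·) 1 (Eventually.of_forall fun y => by simp [norm_mul])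
  calc ∫⁻ y in S, ‖w y * u (x - y)‖₊ ∂volume
      = eLpNorm (fun y => w y * u (x - y)) 1 (volume.restrict S) :=
        by rw [eLpNorm_one_eq_lintegral_enorm]; rfl
    _ ≤ eLpNorm w q (volume.restrict S) *
          eLpNorm (fun y => u (x - y)) p (volume.restrict S) := hHolder
    _ ≤ eLpNorm u p (volume.restrict T) * eLpNorm w q (volume.restrict S) := by
        rw [mul_comm (eLpNorm u p (volume.restrict T))]
        exact mul_le_mul_right (comp_eLpNorm_le hS hT hu hx) _

/-- Pointwise bound for the convolution. -/
lemma key1 {S T : Set (ℝ × ℝ)} (hS : MeasurableSet S) (hT : MeasurableSet T)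
    {p q : ℝ≥0∞} (hpq : 1 / p + 1 / q = 1)
    {u w : ℝ × ℝ → ℝ} (hu : AEStronglyMeasurable u (volume.restrict T))
    (hw : AEStronglyMeasurable w (volume.restrict S))
    {x : ℝ × ℝ} (hx : ∀ y ∈ S, x - y ∈ T) :
    ENNReal.ofReal |∫ y in S, w y * u (x - y)| ≤
      eLpNorm u p (volume.restrict T) * eLpNorm w q (volume.restrict S) := by
  refine le_trans ?_ (key0 hS hT hpq hu hw hx)
  rw [← Real.enorm_eq_ofReal_abs]
  exact enorm_integral_le_lintegral_enorm _

/-- Integrability of the convolution integrand. -/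
lemma key_int {S T : Set (ℝ × ℝ)} (hS : MeasurableSet S) (hT : MeasurableSet T)
    {p q : ℝ≥0∞} (hpq : 1 / p + 1 / q = 1)
    {u w : ℝ × ℝ → ℝ} (hu : MemLp u p (volume.restrict T))
    (hw : MemLp w q (volume.restrict S))
    {x : ℝ × ℝ} (hx : ∀ y ∈ S, x - y ∈ T) :
    IntegrableOn (fun y => w y * u (x - y)) S volume := by
  refine ⟨hw.1.mul (comp_aesm hS hT hu.1 hx), ?_⟩
  have : (∫⁻ y in S, ‖w y * u (x - y)‖₊ ∂volume) < ⊤ :=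
    lt_of_le_of_lt (key0 hS hT hpq hu.1 hw.1 hx) (ENNReal.mul_lt_top hu.2 hw.2)
  exact this

/-- Continuity of translations in `L^p(ℝ²)`. -/
lemma translate_small {p : ℝ≥0∞} (hp1 : 1 ≤ p) (hptop : p ≠ ⊤) {f : ℝ × ℝ → ℝ}
    (hf : MemLp f p volume) {ε : ℝ≥0∞} (hε : ε ≠ 0) :
    ∃ δ : ℝ, 0 < δ ∧ ∀ h : ℝ × ℝ, ‖h‖ < δ →
      eLpNorm (fun z => f (z + h) - f z) p volume ≤ ε := by
  haveI : Fact (1 ≤ p) := ⟨hp1⟩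
  rcases eq_or_ne ε ⊤ with rfl | hεtop
  · exact ⟨1, one_pos, fun h _ => le_top⟩
  set F := hf.toLp f with hF
  set G : C(ℝ × ℝ, C(ℝ × ℝ, ℝ × ℝ)) :=
    ContinuousMap.curry ⟨fun a => a.2 + a.1, by fun_prop⟩ with hG
  have hgm : ∀ h : ℝ × ℝ, MeasurePreserving (G h) volume volume := fun h =>
    measurePreserving_add_right volume h
  set A : ℝ × ℝ → Lp ℝ p (volume : Measure (ℝ × ℝ)) :=
    fun h => Lp.compMeasurePreserving (G h) (hgm h) F with hA
  have hAcont : Continuous A :=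
    Continuous.compMeasurePreservingLp continuous_const G.continuous hgm hptop
  have hcoe : ∀ h : ℝ × ℝ, (A h : ℝ × ℝ → ℝ) =ᵐ[volume] fun z => f (z + h) := by
    intro h
    refine (Lp.coeFn_compMeasurePreserving _ _).trans ?_
    exact (hgm h).quasiMeasurePreserving.ae_eq (MemLp.coeFn_toLp hf)
  have hkey : ∀ h : ℝ × ℝ,
      eLpNorm (fun z => f (z + h) - f z) p volume = ENNReal.ofReal ‖A h - A 0‖ := by
    intro h
    have h0 : (A 0 : ℝ × ℝ → ℝ) =ᵐ[volume] f := by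
      refine (hcoe 0).trans ?_
      filter_upwards with z
      rw [add_zero]
    have hsub : ((A h - A 0 : Lp ℝ p volume) : ℝ × ℝ → ℝ) =ᵐ[volume]
        fun z => f (z + h) - f z := (Lp.coeFn_sub _ _).trans ((hcoe h).sub h0)
    rw [← eLpNorm_congr_ae hsub, Lp.norm_def,
      ENNReal.ofReal_toReal (Lp.eLpNorm_ne_top _)]
  obtain ⟨δ, hδ0, hδ⟩ := Metric.continuousAt_iff.mp hAcont.continuousAt
    ε.toReal (ENNReal.toReal_pos hε hεtop)
  refine ⟨δ, hδ0, fun h hh => ?_⟩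
  have hd : dist (A h) (A 0) < ε.toReal := hδ (by simpa [dist_zero_right] using hh)
  rw [hkey h]
  calc ENNReal.ofReal ‖A h - A 0‖ ≤ ENNReal.ofReal ε.toReal := by
        rw [← dist_eq_norm]
        exact ENNReal.ofReal_le_ofReal hd.le
    _ = ε := ENNReal.ofReal_toReal hεtop

/-- Translation invariance of the `L^p` norm on `ℝ²`. -/
lemma eLpNorm_translate {p : ℝ≥0∞} {ψ : ℝ × ℝ → ℝ} (hψ : AEStronglyMeasurable ψ volume)
    (h : ℝ × ℝ) : eLpNorm (fun z => ψ (z + h)) p volume = eLpNorm ψ p volume :=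
  eLpNorm_comp_measurePreserving hψ (measurePreserving_add_right volume h)

end Stmt7Aux

open Stmt7Aux

/-- if `u_n → u` strongly in `L^p(Ω − Σ)` and `(w_n)` is bounded in
`L^{p'}(Σ)`, then the convolutions `u_n * w_n` are pointwise dominated by
`‖u_n‖_p ‖w_n‖_{p'}`, uniformly bounded, and uniformly equicontinuous on `Ω`. -/
theorem stmt7
    (Ω Sig : Set (ℝ × ℝ)) (hΩ : IsRect Ω) (hSig : IsRect Sig)
    (h0 : (0 : ℝ × ℝ) ∈ Sig)
    (p q : ℝ≥0∞) (hp : 1 < p) (hptop : p ≠ ⊤) (hpq : 1 / p + 1 / q = 1)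
    (un : ℕ → ℝ × ℝ → ℝ) (u : ℝ × ℝ → ℝ)
    (wn : ℕ → ℝ × ℝ → ℝ)
    (hun : ∀ n, MemLp (un n) p (volume.restrict (Ω - Sig)))
    (hu : MemLp u p (volume.restrict (Ω - Sig)))
    (hwn : ∀ n, MemLp (wn n) q (volume.restrict Sig))
    (hstrong : Tendsto (fun n => eLpNorm (un n - u) p (volume.restrict (Ω - Sig)))
      atTop (nhds 0))
    (hbdd : ∃ M : ℝ≥0∞, M ≠ ⊤ ∧ ∀ n, eLpNorm (wn n) q (volume.restrict Sig) ≤ M) :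
    (∀ n, ∀ x ∈ Ω, ENNReal.ofReal |vconv Sig (un n) (wn n) x| ≤
        eLpNorm (un n) p (volume.restrict (Ω - Sig)) *
          eLpNorm (wn n) q (volume.restrict Sig)) ∧
    (∃ C : ℝ, ∀ n, ∀ x ∈ Ω, |vconv Sig (un n) (wn n) x| ≤ C) ∧
    (∀ ε : ℝ, 0 < ε → ∃ δ : ℝ, 0 < δ ∧ ∀ (n : ℕ) (x h : ℝ × ℝ), x ∈ Ω → x + h ∈ Ω →
      ‖h‖ < δ → |vconv Sig (un n) (wn n) (x + h) - vconv Sig (un n) (wn n) x| ≤ ε) := by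
  classical
  -- basic topology/measurability facts
  have hΩopen : IsOpen Ω := by
    obtain ⟨a, b, c, d, -, -, rfl⟩ := hΩ
    exact isOpen_Ioo.prod isOpen_Ioo
  have hSopen : IsOpen Sig := by
    obtain ⟨a, b, c, d, -, -, rfl⟩ := hSig
    exact isOpen_Ioo.prod isOpen_Ioo
  have hTopen : IsOpen (Ω - Sig) := hΩopen.sub_right
  have hTm : MeasurableSet (Ω - Sig) := hTopen.measurableSet
  have hSm : MeasurableSet Sig := hSopen.measurableSet
  have hxsub : ∀ x ∈ Ω, ∀ y ∈ Sig, x - y ∈ Ω - Sig := fun x hx y hy =>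
    Set.sub_mem_sub hx hy
  obtain ⟨M, hMtop, hM⟩ := hbdd
  -- Part 1
  have part1 : ∀ n, ∀ x ∈ Ω, ENNReal.ofReal |vconv Sig (un n) (wn n) x| ≤
      eLpNorm (un n) p (volume.restrict (Ω - Sig)) *
        eLpNorm (wn n) q (volume.restrict Sig) := fun n x hx =>
    key1 hSm hTm hpq (hun n).1 (hwn n).1 (hxsub x hx)
  refine ⟨part1, ?_, ?_⟩
  -- Part 2: uniform bound
  · have hev : ∀ᶠ n in atTop,
        eLpNorm (un n - u) p (volume.restrict (Ω - Sig)) < 1 :=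
      hstrong.eventually_lt_const one_pos
    obtain ⟨N, hN⟩ := eventually_atTop.mp hev
    set K := ((Finset.range N).sup fun n => eLpNorm (un n) p (volume.restrict (Ω - Sig))) ⊔
      (eLpNorm u p (volume.restrict (Ω - Sig)) + 1) with hK
    have hKtop : K ≠ ⊤ := by
      rw [hK]
      refine (sup_lt_iff.mpr ⟨?_, ?_⟩).ne
      · refine (Finset.sup_lt_iff (by simp : (⊥ : ℝ≥0∞) < ⊤)).mpr fun n _ => (hun n).2
      · exact ENNReal.add_lt_top.mpr ⟨hu.2, ENNReal.one_lt_top⟩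
    have hKb : ∀ n, eLpNorm (un n) p (volume.restrict (Ω - Sig)) ≤ K := by
      intro n
      rcases lt_or_ge n N with hn | hn
      · exact le_sup_of_le_left (Finset.le_sup
          (f := fun n => eLpNorm (un n) p (volume.restrict (Ω - Sig)))
          (Finset.mem_range.mpr hn))
      · refine le_sup_of_le_right ?_
        have heq : un n = (un n - u) + u := by funext z; simp
        calc eLpNorm (un n) p (volume.restrict (Ω - Sig))
            = eLpNorm ((un n - u) + u) p (volume.restrict (Ω - Sig)) := by rw [← heq]
          _ ≤ eLpNorm (un n - u) p (volume.restrict (Ω - Sig)) +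
              eLpNorm u p (volume.restrict (Ω - Sig)) :=
              eLpNorm_add_le ((hun n).1.sub hu.1) hu.1 hp.le
          _ ≤ 1 + eLpNorm u p (volume.restrict (Ω - Sig)) :=
              add_le_add_left (hN n hn).le _
          _ = eLpNorm u p (volume.restrict (Ω - Sig)) + 1 := add_comm _ _
    refine ⟨(K * M).toReal, fun n x hx => ?_⟩
    have hb : ENNReal.ofReal |vconv Sig (un n) (wn n) x| ≤ K * M :=
      (part1 n x hx).trans (mul_le_mul' (hKb n) (hM n))
    have := ENNReal.toReal_mono (ENNReal.mul_ne_top hKtop hMtop) hb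
    rwa [ENNReal.toReal_ofReal (abs_nonneg _)] at this
  -- Part 3: uniform equicontinuity
  · intro ε hε
    obtain ⟨gs, hgsm, hgse⟩ : ∃ gs : ℕ → ℝ × ℝ → ℝ, (∀ n, StronglyMeasurable (gs n)) ∧
        ∀ n, un n =ᵐ[volume.restrict (Ω - Sig)] gs n :=
      ⟨fun n => (hun n).1.mk (un n), fun n => (hun n).1.stronglyMeasurable_mk,
        fun n => (hun n).1.ae_eq_mk⟩
    obtain ⟨g0, hg0m, hg0e⟩ : ∃ g0 : ℝ × ℝ → ℝ, StronglyMeasurable g0 ∧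
        u =ᵐ[volume.restrict (Ω - Sig)] g0 :=
      ⟨hu.1.mk u, hu.1.stronglyMeasurable_mk, hu.1.ae_eq_mk⟩
    set fn : ℕ → ℝ × ℝ → ℝ := fun n => (Ω - Sig).indicator (gs n) with hfn
    set f0 : ℝ × ℝ → ℝ := (Ω - Sig).indicator g0 with hf0
    have hfnm : ∀ n, StronglyMeasurable (fn n) := fun n => (hgsm n).indicator hTm
    have hf0m : StronglyMeasurable f0 := hg0m.indicator hTm
    have memfn : ∀ n, MemLp (fn n) p volume := fun n =>
      ⟨(hfnm n).aestronglyMeasurable, by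
        rw [hfn]
        simp only
        rw [eLpNorm_indicator_eq_eLpNorm_restrict hTm,
          ← eLpNorm_congr_ae (hgse n)]
        exact (hun n).2⟩
    have memf0 : MemLp f0 p volume := ⟨hf0m.aestronglyMeasurable, by
        rw [hf0, eLpNorm_indicator_eq_eLpNorm_restrict hTm,
          ← eLpNorm_congr_ae hg0e]
        exact hu.2⟩
    -- distance of truncations equals the Lp distance
    have hdn : ∀ n, eLpNorm (fun z => fn n z - f0 z) p volume
        = eLpNorm (un n - u) p (volume.restrict (Ω - Sig)) := by
      intro n
      have e1 : (fun z => fn n z - f0 z)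
          = (Ω - Sig).indicator (fun z => gs n z - g0 z) := by
        funext z
        by_cases hz : z ∈ Ω - Sig <;>
          simp [hfn, hf0, Set.indicator_of_mem, Set.indicator_of_notMem, hz]
      rw [e1, eLpNorm_indicator_eq_eLpNorm_restrict hTm]
      refine eLpNorm_congr_ae ?_
      filter_upwards [hgse n, hg0e] with z h1 h2
      simp only [Pi.sub_apply, ← h1, ← h2]
    -- rewriting the convolution using fn
    have hconv : ∀ n, ∀ x' ∈ Ω, vconv Sig (un n) (wn n) x'
        = ∫ y in Sig, wn n y * fn n (x' - y) := by
      intro n x' hx'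
      refine integral_congr_ae ?_
      have h1 := ae_comp_sub_eq hSm hTm (hgse n) (hxsub x' hx')
      have h2 : ∀ᵐ y ∂(volume.restrict Sig), y ∈ Sig := ae_restrict_mem hSm
      filter_upwards [h1, h2] with y hy1 hy2
      have hfe : fn n (x' - y) = gs n (x' - y) := by
        rw [hfn]
        exact Set.indicator_of_mem (hxsub x' hx' y hy2) _
      rw [hfe, ← hy1]
    -- integrability of the truncated integrands
    have hint : ∀ n (x' : ℝ × ℝ), IntegrableOn (fun y => wn n y * fn n (x' - y)) Sig volume := by
      intro n x'
      refine key_int hSm MeasurableSet.univ hpq ?_ (hwn n) (fun y _ => Set.mem_univ _)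
      rw [Measure.restrict_univ]
      exact memfn n
    -- the difference formula
    have hdiff : ∀ (n : ℕ) (x h : ℝ × ℝ), x ∈ Ω → x + h ∈ Ω →
        vconv Sig (un n) (wn n) (x + h) - vconv Sig (un n) (wn n) x
          = ∫ y in Sig, wn n y * (fn n ((x - y) + h) - fn n (x - y)) := by
      intro n x h hx hxh
      rw [hconv n _ hxh, hconv n _ hx, ← integral_sub (hint n (x + h)) (hint n x)]
      refine integral_congr_ae (Eventually.of_forall fun y => ?_)
      simp only [mul_sub]
      rw [add_sub_right_comm]
    -- pointwise bound via Hölder with the translated difference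
    have hbound : ∀ (n : ℕ) (x h : ℝ × ℝ), x ∈ Ω → x + h ∈ Ω →
        ENNReal.ofReal |vconv Sig (un n) (wn n) (x + h) - vconv Sig (un n) (wn n) x|
          ≤ eLpNorm (fun z => fn n (z + h) - fn n z) p volume * M := by
      intro n x h hx hxh
      rw [hdiff n x h hx hxh]
      have haesm : AEStronglyMeasurable (fun z => fn n (z + h) - fn n z)
          (volume.restrict (Set.univ : Set (ℝ × ℝ))) := by
        rw [Measure.restrict_univ]
        exact (((hfnm n).comp_measurable
          (measurable_id.add_const h)).sub (hfnm n)).aestronglyMeasurable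
      have hk := key1 (u := fun z => fn n (z + h) - fn n z) (w := wn n) (x := x)
        hSm MeasurableSet.univ hpq haesm (hwn n).1 (fun y _ => Set.mem_univ _)
      rw [Measure.restrict_univ] at hk
      exact hk.trans (mul_le_mul' le_rfl (hM n))
    -- the constants
    set M1 := M + 1 with hM1
    have hM1top : M1 ≠ ⊤ := by
      rw [hM1]
      exact ENNReal.add_ne_top.mpr ⟨hMtop, ENNReal.one_ne_top⟩
    have hM10 : M1 ≠ 0 := by
      rw [hM1]
      simp
    set εE := ENNReal.ofReal ε / M1 with hεE
    have hεE0 : εE ≠ 0 :=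
      ENNReal.div_ne_zero.mpr ⟨by simp [hε], hM1top⟩
    have hεE20 : εE / 2 ≠ 0 :=
      ENNReal.div_ne_zero.mpr ⟨hεE0, ENNReal.ofNat_ne_top⟩
    have hη0 : εE / 2 / 2 ≠ 0 :=
      ENNReal.div_ne_zero.mpr ⟨hεE20, ENNReal.ofNat_ne_top⟩
    -- choose N with small distances
    have hdt : Tendsto (fun n => eLpNorm (fun z => fn n z - f0 z) p volume) atTop (𝓝 0) :=
      hstrong.congr fun n => (hdn n).symm
    have hevent : ∀ᶠ n in atTop,
        eLpNorm (fun z => fn n z - f0 z) p volume < εE / 2 / 2 :=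
      hdt.eventually_lt_const (pos_iff_ne_zero.mpr hη0)
    obtain ⟨N, hN2⟩ := eventually_atTop.mp hevent
    -- choose the deltas
    obtain ⟨δ₀, hδ₀0, hδ₀⟩ := translate_small hp.le hptop memf0 hεE20
    choose δs hδs0 hδs using fun n => translate_small hp.le hptop (memfn n) hεE0
    set δ1 : ℝ := if hN0 : N = 0 then 1
      else (Finset.range N).inf' (Finset.nonempty_range_iff.mpr hN0) δs with hδ1
    have hδ1pos : 0 < δ1 := by
      rw [hδ1]
      split
      · exact one_pos
      · exact (Finset.lt_inf'_iff _).mpr fun n _ => hδs0 n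
    have hδ1le : ∀ n < N, δ1 ≤ δs n := by
      intro n hn
      have hN0 : N ≠ 0 := by omega
      rw [hδ1, dif_neg hN0]
      exact Finset.inf'_le _ (Finset.mem_range.mpr hn)
    refine ⟨min δ₀ δ1, lt_min hδ₀0 hδ1pos, ?_⟩
    intro n x h hx hxh hh
    -- the uniform translation estimate
    have hest : eLpNorm (fun z => fn n (z + h) - fn n z) p volume ≤ εE := by
      rcases lt_or_ge n N with hn | hn
      · exact hδs n h (hh.trans_le ((min_le_right _ _).trans (hδ1le n hn)))
      · have m2 : AEStronglyMeasurable (fun z => fn n (z + h) - f0 (z + h))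
            (volume : Measure (ℝ × ℝ)) :=
          (((hfnm n).comp_measurable (measurable_id.add_const h)).sub
            (hf0m.comp_measurable (measurable_id.add_const h))).aestronglyMeasurable
        have m1 : AEStronglyMeasurable (fun z => f0 (z + h) - f0 z)
            (volume : Measure (ℝ × ℝ)) :=
          ((hf0m.comp_measurable (measurable_id.add_const h)).sub
            hf0m).aestronglyMeasurable
        have m3 : AEStronglyMeasurable (fun z => f0 z - fn n z)
            (volume : Measure (ℝ × ℝ)) :=
          (hf0m.sub (hfnm n)).aestronglyMeasurable
        have heq : (fun z => fn n (z + h) - fn n z)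
            = (fun z => (f0 (z + h) - f0 z) +
                ((fn n (z + h) - f0 (z + h)) + (f0 z - fn n z))) := by
          funext z; ring
        have ht1 : eLpNorm (fun z => fn n (z + h) - f0 (z + h)) p volume
            = eLpNorm (fun z => fn n z - f0 z) p volume :=
          eLpNorm_translate ((hfnm n).sub hf0m).aestronglyMeasurable h
        have ht3 : eLpNorm (fun z => f0 z - fn n z) p volume
            = eLpNorm (fun z => fn n z - f0 z) p volume :=
          eLpNorm_sub_comm _ _ _ _
        calc eLpNorm (fun z => fn n (z + h) - fn n z) p volume
            ≤ eLpNorm (fun z => f0 (z + h) - f0 z) p volume +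
              eLpNorm (fun z => (fn n (z + h) - f0 (z + h)) + (f0 z - fn n z)) p volume := by
              rw [heq]
              exact eLpNorm_add_le m1 (m2.add m3) hp.le
          _ ≤ eLpNorm (fun z => f0 (z + h) - f0 z) p volume +
              (eLpNorm (fun z => fn n (z + h) - f0 (z + h)) p volume +
                eLpNorm (fun z => f0 z - fn n z) p volume) :=
              add_le_add_right (eLpNorm_add_le m2 m3 hp.le) _
          _ = eLpNorm (fun z => f0 (z + h) - f0 z) p volume +
              (eLpNorm (fun z => fn n z - f0 z) p volume +
                eLpNorm (fun z => fn n z - f0 z) p volume) := by rw [ht1, ht3]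
          _ ≤ εE / 2 + (εE / 2 / 2 + εE / 2 / 2) :=
              add_le_add (hδ₀ h (lt_of_lt_of_le hh (min_le_left _ _)))
                (add_le_add (hN2 n hn).le (hN2 n hn).le)
          _ = εE / 2 + εE / 2 := by rw [ENNReal.add_halves]
          _ = εE := ENNReal.add_halves _
    -- conclude
    have hfin : ENNReal.ofReal
        |vconv Sig (un n) (wn n) (x + h) - vconv Sig (un n) (wn n) x|
          ≤ ENNReal.ofReal ε := by
      refine (hbound n x h hx hxh).trans ?_
      calc eLpNorm (fun z => fn n (z + h) - fn n z) p volume * M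
          ≤ εE * M1 := mul_le_mul' hest (by rw [hM1]; exact le_self_add)
        _ = ENNReal.ofReal ε := by
            rw [hεE]
            exact ENNReal.div_mul_cancel hM10 hM1top
    exact (ENNReal.ofReal_le_ofReal_iff hε.le).mp hfin
end
end

section
/- Let θ ⊂ ℝ² be a bounded rectangular domain, compatible with the grids of mesh size h for each h in a sequence h_k ↓ 0, and let s ∈ ℕ, s ≥ 1. Let f : ℝ^{s×s} → ℝ satisfy min_{i,j} U_{i,j} ≤ f(U) ≤ max_{i,j} U_{i,j} for all U ∈ ℝ^{s×s}. Let u^{h_k} ∈ PC^{h_k}(θ) and u ∈ C(cl θ) with u^{h_k} → u uniformly as k → ∞. Then the downsampled functions D_s^{h_k} u^{h_k} converge to u uniformly on θ as k → ∞. -/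
open MeasureTheory Filter Topology Pointwise
open scoped ENNReal Classical

noncomputable section

/-- The index `(i,j)` of the grid square `Q^h_{i,j} = (ih,jh) + [−h/2,h/2)²`
containing `x`. -/
def gridIdx (h : ℝ) (x : ℝ × ℝ) : ℤ × ℤ :=
  (⌊x.1 / h + 1 / 2⌋, ⌊x.2 / h + 1 / 2⌋)

/-- The grid point `x^h_{i,j} = (ih, jh)`. -/
def gridPt (h : ℝ) (ij : ℤ × ℤ) : ℝ × ℝ :=
  (h * ij.1, h * ij.2)

/-- The index `(k,l)` of the `s × s` block of fine grid squares containing the square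
with index `ij`. -/
def blockIdx (s : ℕ) (ij : ℤ × ℤ) : ℤ × ℤ :=
  (Int.fdiv ij.1 s, Int.fdiv ij.2 s)

/-- The downsampling operator `𝔇_s^h` applied to the piecewise-constant function with
coefficient array `U` (i.e. `u^h = Σ_{k,l} U_{k,l} χ_{Q^h_{k,l}}`):
the value on the block containing `x` is
`f((U_{s k + i, s l + j})_{i,j=0}^{s−1})` where `(k,l)` is the block index of `x`. -/
def downsample (s : ℕ) (f : (Fin s → Fin s → ℝ) → ℝ) (h : ℝ)
    (U : ℤ × ℤ → ℝ) : ℝ × ℝ → ℝ :=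
  fun x =>
    let b := blockIdx s (gridIdx h x)
    f (fun i j => U ((s : ℤ) * b.1 + (i : ℤ), (s : ℤ) * b.2 + (j : ℤ)))

lemma gridIdx_gridPt (h : ℝ) (hh : 0 < h) (ij : ℤ × ℤ) :
    gridIdx h (gridPt h ij) = ij := by
  have key : ∀ n : ℤ, ⌊h * (n:ℝ) / h + 1/2⌋ = n := by
    intro n
    rw [mul_comm, mul_div_assoc, div_self hh.ne', mul_one, Int.floor_intCast_add]
    norm_num
  exact Prod.ext (key ij.1) (key ij.2)

lemma coord_bound (h : ℝ) (hh : 0 < h) (s : ℕ) (hs : 1 ≤ s) (x : ℝ) (i' : Fin s) :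
    |h * (((s:ℤ) * Int.fdiv ⌊x / h + 1/2⌋ s + (i':ℤ) : ℤ) : ℝ) - x| < h * s := by
  set i := ⌊x / h + 1/2⌋ with hidef
  have hspos : (0:ℤ) < (s:ℤ) := by exact_mod_cast hs
  have hfd : Int.fdiv i s = i / (s:ℤ) := Int.fdiv_eq_ediv_of_nonneg i hspos.le
  have h1 : (s:ℤ) * (i / s) + i % s = i := Int.mul_ediv_add_emod i s
  have h2 : 0 ≤ i % s := Int.emod_nonneg i hspos.ne'
  have h3 : i % s ≤ (s:ℤ) - 1 := by
    have := Int.emod_lt_of_pos i hspos; omega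
  have hfl : (i:ℝ) - 1/2 ≤ x / h := by
    have := Int.floor_le (x / h + 1/2); rw [← hidef] at this; linarith
  have hfl2 : x / h < (i:ℝ) + 1/2 := by
    have := Int.lt_floor_add_one (x / h + 1/2); rw [← hidef] at this; linarith
  have hx1 : h * ((i:ℝ) - 1/2) ≤ x := by
    have := mul_le_mul_of_nonneg_left hfl hh.le
    rwa [mul_div_cancel₀ x hh.ne'] at this
  have hx2 : x < h * ((i:ℝ) + 1/2) := by
    have := mul_lt_mul_of_pos_left hfl2 hh
    rwa [mul_div_cancel₀ x hh.ne'] at this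
  have hi'1 : (0:ℝ) ≤ ((i':ℤ):ℝ) := by positivity
  have hi'2 : ((i':ℤ):ℝ) ≤ (s:ℝ) - 1 := by
    have : (i':ℤ) ≤ (s:ℤ) - 1 := by have := i'.isLt; omega
    exact_mod_cast this
  have r1 : (s:ℝ) * ((i/(s:ℤ) : ℤ):ℝ) + ((i % s : ℤ):ℝ) = (i:ℝ) := by exact_mod_cast h1
  have r2 : (0:ℝ) ≤ ((i % s : ℤ):ℝ) := by exact_mod_cast h2
  have r3 : ((i % s : ℤ):ℝ) ≤ (s:ℝ) - 1 := by exact_mod_cast h3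
  have p1 : h * ((i':ℤ):ℝ) ≤ h * ((s:ℝ)-1) := mul_le_mul_of_nonneg_left hi'2 hh.le
  have p2 : 0 ≤ h * ((i % s : ℤ):ℝ) := mul_nonneg hh.le r2
  have p3 : h * ((i % s : ℤ):ℝ) ≤ h * ((s:ℝ)-1) := mul_le_mul_of_nonneg_left r3 hh.le
  have p4 : 0 ≤ h * ((i':ℤ):ℝ) := mul_nonneg hh.le hi'1
  have q : h * ((s:ℝ) * ((i/(s:ℤ):ℤ):ℝ)) + h * ((i % s : ℤ):ℝ) = h * (i:ℝ) := by
    rw [← mul_add, r1]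
  have hs1 : (1:ℝ) ≤ (s:ℝ) := by exact_mod_cast hs
  rw [hfd, abs_sub_lt_iff]
  push_cast at p1 p2 p3 p4 q hx1 hx2 ⊢
  constructor <;> linarith

/-- downsampling with an averaging function satisfying the min–max
sandwich property preserves uniform convergence `u^{h_k} → u ∈ C(cl θ)` on a bounded
rectangular domain compatible with the grids. -/
theorem stmt10
    (θ : Set (ℝ × ℝ)) (hθ : IsRect θ)
    (h : ℕ → ℝ) (hpos : ∀ k, 0 < h k) (hto : Tendsto h atTop (nhds 0))
    (s : ℕ) (hs : 1 ≤ s)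
    (f : (Fin s → Fin s → ℝ) → ℝ)
    (hf_le : ∀ (U : Fin s → Fin s → ℝ) (c : ℝ), (∀ i j, U i j ≤ c) → f U ≤ c)
    (hf_ge : ∀ (U : Fin s → Fin s → ℝ) (c : ℝ), (∀ i j, c ≤ U i j) → c ≤ f U)
    (u : ℝ × ℝ → ℝ) (hu : ContinuousOn u (closure θ))
    (uk : ℕ → ℝ × ℝ → ℝ) (U : ℕ → ℤ × ℤ → ℝ)
    (hPC : ∀ k, ∀ x ∈ θ, uk k x = U k (gridIdx (h k) x))
    (hcompat : ∀ k, ∀ x ∈ θ, ∀ i j : Fin s,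
      gridPt (h k) ((s : ℤ) * (blockIdx s (gridIdx (h k) x)).1 + (i : ℤ),
        (s : ℤ) * (blockIdx s (gridIdx (h k) x)).2 + (j : ℤ)) ∈ θ)
    (hconv : TendstoUniformlyOn uk u atTop θ) :
    TendstoUniformlyOn (fun k => downsample s f (h k) (U k)) u atTop θ := by
  obtain ⟨a, b, c, d, hab, hcd, hθeq⟩ := hθ
  have hcomp : IsCompact (closure θ) := by
    rw [hθeq, closure_prod_eq, closure_Ioo hab.ne, closure_Ioo hcd.ne]
    exact isCompact_Icc.prod isCompact_Icc
  have hucont : UniformContinuousOn u (closure θ) :=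
    hcomp.uniformContinuousOn_of_continuous hu
  rw [Metric.tendstoUniformlyOn_iff] at hconv ⊢
  intro ε hε
  obtain ⟨δ, hδ, hδ'⟩ := Metric.uniformContinuousOn_iff.mp hucont (ε/4) (by positivity)
  have hN2 : ∀ᶠ k in atTop, h k * s < δ := by
    have : Tendsto (fun k => h k * s) atTop (nhds 0) := by
      simpa using hto.mul_const (s:ℝ)
    exact this.eventually_lt_const hδ
  filter_upwards [hconv (ε/4) (by positivity), hN2] with k hk1 hk2 x hx
  have hhk := hpos k
  set bI := blockIdx s (gridIdx (h k) x) with hbI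
  set V : Fin s → Fin s → ℝ :=
    fun i j => U k ((s : ℤ) * bI.1 + (i : ℤ), (s : ℤ) * bI.2 + (j : ℤ)) with hV
  have hdown : downsample s f (h k) (U k) x = f V := rfl
  have key : ∀ i j : Fin s, |V i j - u x| ≤ ε/2 := by
    intro i j
    set y := gridPt (h k) ((s : ℤ) * bI.1 + (i : ℤ), (s : ℤ) * bI.2 + (j : ℤ)) with hy
    have hyθ : y ∈ θ := hcompat k x hx i j
    have hVval : V i j = uk k y := by
      rw [hPC k y hyθ, hy, gridIdx_gridPt _ hhk]
    have hdyx : dist y x < δ := by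
      rw [Prod.dist_eq]
      have b1 : dist y.1 x.1 < δ := by
        rw [Real.dist_eq]
        exact lt_of_lt_of_le (coord_bound (h k) hhk s hs x.1 i) (le_of_lt hk2)
      have b2 : dist y.2 x.2 < δ := by
        rw [Real.dist_eq]
        exact lt_of_lt_of_le (coord_bound (h k) hhk s hs x.2 j) (le_of_lt hk2)
      exact max_lt b1 b2
    have h1 : dist (u y) (uk k y) < ε/4 := hk1 y hyθ
    have h2 : dist (u y) (u x) < ε/4 :=
      hδ' y (subset_closure hyθ) x (subset_closure hx) hdyx
    have : dist (uk k y) (u x) < ε/2 := by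
      calc dist (uk k y) (u x) ≤ dist (uk k y) (u y) + dist (u y) (u x) := dist_triangle _ _ _
        _ < ε/4 + ε/4 := by rw [dist_comm (uk k y)]; exact add_lt_add h1 h2
        _ = ε/2 := by ring
    rw [hVval, ← Real.dist_eq]
    exact this.le
  have hub : f V ≤ u x + ε/2 := by
    apply hf_le
    intro i j
    have := abs_sub_le_iff.mp (key i j)
    linarith [this.1]
  have hlb : u x - ε/2 ≤ f V := by
    apply hf_ge
    intro i j
    have := abs_sub_le_iff.mp (key i j)
    linarith [this.2]
  rw [hdown, Real.dist_eq, abs_sub_lt_iff]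
  constructor <;> linarith
end
end

section
/- Let X be a reflexive Banach space, let (F_n)_n be a sequence of proper functionals F_n : X → ℝ ∪ {∞} that is equicoercive (there exists a coercive F̄ : X → ℝ ∪ {∞} with F̄ ≤ F_n for all n) and weakly Γ-converges to F : X → ℝ ∪ {∞}, and let x̂_n ∈ X be a minimizer of F_n for each n. Then either (i) F_n(x̂_n) → ∞ and F ≡ ∞, or (ii) F_n(x̂_n) → min_{x∈X} F(x) < ∞; in case (ii) every weak accumulation point of (x̂_n)_n is a minimizer of F, at least one weak accumulation point exists, and if F has a unique minimizer x̂ then the whole sequence converges weakly, x̂_n ⇀ x̂. -/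
open Filter Topology

noncomputable section

/-- Weak convergence of a sequence in a normed space: convergence tested against all
continuous linear functionals. -/
def WeakConv {X : Type*} [NormedAddCommGroup X] [NormedSpace ℝ X]
    (x : ℕ → X) (x₀ : X) : Prop :=
  ∀ f : X →L[ℝ] ℝ, Tendsto (fun n => f (x n)) atTop (nhds (f x₀))

/-- the fundamental theorem of Γ-convergence.  `X` is a reflexive Banach
space (reflexivity is expressed by its sequential characterization: every bounded
sequence has a weakly convergent subsequence); extended-real valued functionals are
modelled as `EReal`-valued functions never taking the value `⊥`. -/
theorem stmt15 {X : Type*} [NormedAddCommGroup X] [NormedSpace ℝ X] [CompleteSpace X]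
    -- reflexivity (sequential Banach–Alaoglu / Eberlein–Šmulian characterization)
    (hrefl : ∀ y : ℕ → X, (∃ C : ℝ, ∀ n, ‖y n‖ ≤ C) →
      ∃ (x₀ : X) (φ : ℕ → ℕ), StrictMono φ ∧ WeakConv (y ∘ φ) x₀)
    (F : X → EReal) (Fn : ℕ → X → EReal)
    (hFn_nobot : ∀ n x, Fn n x ≠ ⊥) (hF_nobot : ∀ x, F x ≠ ⊥)
    -- each `F_n` is proper
    (hproper : ∀ n, ∃ x, Fn n x ≠ ⊤)
    -- equicoercivity: a coercive functional `F̄` with `F̄ ≤ F_n` for all `n`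
    (Fbar : X → EReal) (hFbar_nobot : ∀ x, Fbar x ≠ ⊥)
    (hcoercive : ∀ C : ℝ, ∃ R : ℝ, ∀ x : X, R ≤ ‖x‖ → (C : EReal) ≤ Fbar x)
    (hequi : ∀ n x, Fbar x ≤ Fn n x)
    -- weak Γ-convergence: liminf inequality and existence of recovery sequences
    (hliminf : ∀ (x₀ : X) (x : ℕ → X), WeakConv x x₀ →
      F x₀ ≤ Filter.liminf (fun n => Fn n (x n)) atTop)
    (hrecov : ∀ x₀ : X, ∃ x : ℕ → X, WeakConv x x₀ ∧
      Filter.limsup (fun n => Fn n (x n)) atTop ≤ F x₀)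
    -- minimizers of the `F_n`
    (xh : ℕ → X) (hmin : ∀ n y, Fn n (xh n) ≤ Fn n y) :
    (Tendsto (fun n => Fn n (xh n)) atTop (nhds (⊤ : EReal)) ∧ ∀ x, F x = ⊤) ∨
    (∃ x₀ : X, (∀ y, F x₀ ≤ F y) ∧ F x₀ ≠ ⊤ ∧
      Tendsto (fun n => Fn n (xh n)) atTop (nhds (F x₀)) ∧
      (∀ z : X, (∃ φ : ℕ → ℕ, StrictMono φ ∧ WeakConv (xh ∘ φ) z) → ∀ y, F z ≤ F y) ∧
      (∃ (z : X) (φ : ℕ → ℕ), StrictMono φ ∧ WeakConv (xh ∘ φ) z) ∧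
      (∀ xhat : X,
        ((∀ y, F xhat ≤ F y) ∧ ∀ x' : X, (∀ y, F x' ≤ F y) → x' = xhat) →
        WeakConv xh xhat)) := by
  classical
  set m : ℕ → EReal := fun n => Fn n (xh n) with hm_def
  -- liminf along a subsequence is at least the liminf
  have hsub_liminf : ∀ (u : ℕ → EReal) (φ : ℕ → ℕ), Tendsto φ atTop atTop →
      liminf u atTop ≤ liminf (u ∘ φ) atTop := by
    intro u φ hφ
    rw [liminf_comp]
    exact liminf_le_liminf_of_le hφ
  -- step A : limsup m ≤ F y for every y
  have hA : ∀ y : X, limsup m atTop ≤ F y := by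
    intro y
    obtain ⟨r, _, hrl⟩ := hrecov y
    exact le_trans (limsup_le_limsup (Eventually.of_forall fun n => hmin n (r n))) hrl
  -- core lemma : any weak cluster value z of (xh) along a strictly monotone subsequence φ
  -- satisfies F z ≤ liminf (m ∘ φ)
  have hcore : ∀ (φ : ℕ → ℕ), StrictMono φ → ∀ z : X, WeakConv (xh ∘ φ) z →
      F z ≤ liminf (m ∘ φ) atTop := by
    intro φ hφ z hz
    obtain ⟨r, hrw, _⟩ := hrecov z
    set w : ℕ → X := fun n => if ∃ k, φ k = n then xh n else r n with hw_def
    have hww : WeakConv w z := by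
      intro f
      rw [Metric.tendsto_atTop]
      intro ε hε
      obtain ⟨K, hK⟩ := Metric.tendsto_atTop.1 (hz f) ε hε
      obtain ⟨M, hM⟩ := Metric.tendsto_atTop.1 (hrw f) ε hε
      refine ⟨max (φ K) M, fun n hn => ?_⟩
      by_cases h : ∃ k, φ k = n
      · obtain ⟨k, rfl⟩ := h
        have hk : K ≤ k := hφ.le_iff_le.mp (le_trans (le_max_left _ _) hn)
        have hwn : w (φ k) = xh (φ k) := if_pos ⟨k, rfl⟩
        rw [hwn]
        exact hK k hk
      · have hwn : w n = r n := if_neg h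
        rw [hwn]
        exact hM n (le_trans (le_max_right _ _) hn)
    have h1 : F z ≤ liminf (fun n => Fn n (w n)) atTop := hliminf z w hww
    have h2 : liminf (fun n => Fn n (w n)) atTop ≤
        liminf ((fun n => Fn n (w n)) ∘ φ) atTop :=
      hsub_liminf _ φ hφ.tendsto_atTop
    have h3 : ((fun n => Fn n (w n)) ∘ φ) = m ∘ φ := by
      funext k
      have : w (φ k) = xh (φ k) := if_pos ⟨k, rfl⟩
      simp [Function.comp, this, hm_def]
    rw [h3] at h2
    exact le_trans h1 h2
  by_cases hFt : ∀ x, F x = ⊤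
  · -- case (i)
    left
    have hlim : liminf m atTop = ⊤ := by
      by_contra h
      have hlt : liminf m atTop < ⊤ := lt_top_iff_ne_top.2 h
      obtain ⟨C, hC1, -⟩ := EReal.exists_between_coe_real hlt
      obtain ⟨φ, hφ, hφC⟩ := extraction_of_frequently_atTop
        (frequently_lt_of_liminf_lt (by isBoundedDefault) hC1)
      obtain ⟨R, hR⟩ := hcoercive (C + 1)
      have hbd : ∀ j, ‖xh (φ j)‖ ≤ R := by
        intro j
        by_contra hcon
        have h1 : ((C : ℝ) + 1 : EReal) ≤ Fbar (xh (φ j)) :=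
          hR _ (le_of_lt (lt_of_not_ge hcon))
        have h2 : Fbar (xh (φ j)) ≤ m (φ j) := hequi _ _
        have h3 : ((C : ℝ) + 1 : EReal) < (C : EReal) :=
          lt_of_le_of_lt (le_trans h1 h2) (hφC j)
        rw [show ((C : ℝ) + 1 : EReal) = ((C + 1 : ℝ) : EReal) by norm_cast] at h3
        exact absurd (EReal.coe_lt_coe_iff.1 h3) (by linarith)
      obtain ⟨z, ψ, hψ, hwz⟩ := hrefl (xh ∘ φ) ⟨R, hbd⟩
      have hFz : F z ≤ liminf (m ∘ (φ ∘ ψ)) atTop := hcore (φ ∘ ψ) (hφ.comp hψ) z hwz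
      have hle : liminf (m ∘ (φ ∘ ψ)) atTop ≤ (C : EReal) := by
        refine liminf_le_of_frequently_le (Frequently.of_forall fun j => ?_)
        exact le_of_lt (hφC (ψ j))
      have : F z ≤ (C : EReal) := le_trans hFz hle
      rw [hFt z] at this
      exact absurd this (by simp)
    have hls : limsup m atTop = ⊤ :=
      top_le_iff.1 (hlim ▸ liminf_le_limsup)
    exact ⟨tendsto_of_liminf_eq_limsup hlim hls, hFt⟩
  · -- case (ii)
    right
    push_neg at hFt
    obtain ⟨y₀, hy₀⟩ := hFt
    have hlimsup_lt : limsup m atTop < ⊤ := lt_of_le_of_lt (hA y₀) (lt_top_iff_ne_top.2 hy₀)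
    obtain ⟨C, hC1, -⟩ := EReal.exists_between_coe_real hlimsup_lt
    have hev : ∀ᶠ n in atTop, m n < (C : EReal) := eventually_lt_of_limsup_lt hC1
    obtain ⟨N, hN⟩ := eventually_atTop.1 hev
    obtain ⟨R, hR⟩ := hcoercive (C + 1)
    have hbd : ∀ n, N ≤ n → ‖xh n‖ ≤ R := by
      intro n hn
      by_contra hcon
      have h1 : ((C : ℝ) + 1 : EReal) ≤ Fbar (xh n) := hR _ (le_of_lt (lt_of_not_ge hcon))
      have h3 : ((C : ℝ) + 1 : EReal) < (C : EReal) :=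
        lt_of_le_of_lt (le_trans h1 (hequi _ _)) (hN n hn)
      rw [show ((C : ℝ) + 1 : EReal) = ((C + 1 : ℝ) : EReal) by norm_cast] at h3
      exact absurd (EReal.coe_lt_coe_iff.1 h3) (by linarith)
    -- general extraction principle
    have hextract : ∀ ns : ℕ → ℕ, StrictMono ns →
        ∃ (z : X) (ms : ℕ → ℕ), StrictMono ms ∧ WeakConv (xh ∘ (ns ∘ ms)) z := by
      intro ns hns
      obtain ⟨z, ψ, hψ, hwz⟩ := hrefl (fun j => xh (ns (j + N)))
        ⟨R, fun j => hbd _ (le_trans (Nat.le_add_left N j) (hns.id_le (j + N)))⟩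
      refine ⟨z, fun k => ψ k + N, ?_, ?_⟩
      · intro a b hab
        exact Nat.add_lt_add_right (hψ hab) N
      · exact hwz
    set L := liminf m atTop with hL_def
    have hLlt : L < ⊤ := lt_of_le_of_lt liminf_le_limsup hlimsup_lt
    -- a real sequence decreasing to L from above
    have hCs : ∃ Cs : ℕ → ℝ, (∀ j, L < (Cs j : EReal)) ∧
        Tendsto (fun j => (Cs j : EReal)) atTop (nhds L) := by
      by_cases hLbot : L = ⊥
      · refine ⟨fun j => -(j : ℝ), ?_, ?_⟩
        · intro j; rw [hLbot]; exact EReal.bot_lt_coe _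
        · rw [hLbot]
          rw [EReal.tendsto_nhds_bot_iff_real]
          intro x
          filter_upwards [eventually_gt_atTop ⌈-x⌉₊] with j hj
          have h1 : -x < (j : ℝ) := lt_of_le_of_lt (Nat.le_ceil _) (Nat.cast_lt.2 hj)
          exact EReal.coe_lt_coe_iff.2 (by linarith)
      · obtain ⟨l, hl⟩ : ∃ l : ℝ, L = (l : EReal) :=
          ⟨L.toReal, (EReal.coe_toReal (ne_of_lt hLlt) hLbot).symm⟩
        refine ⟨fun j => l + 1 / (j + 1), ?_, ?_⟩
        · intro j
          rw [hl]
          refine EReal.coe_lt_coe_iff.2 ?_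
          have : (0 : ℝ) < 1 / ((j : ℝ) + 1) := by positivity
          linarith
        · rw [hl]
          rw [EReal.tendsto_coe]
          have := tendsto_one_div_add_atTop_nhds_zero_nat.const_add l
          simpa using this
    obtain ⟨Cs, hCs1, hCs2⟩ := hCs
    obtain ⟨φ, hφ, hφlt⟩ := extraction_forall_of_frequently
      (fun j => frequently_lt_of_liminf_lt (by isBoundedDefault) (hCs1 j))
    have hls_sub : limsup (m ∘ φ) atTop ≤ L := by
      have h1 : limsup (m ∘ φ) atTop ≤ limsup (fun j => (Cs j : EReal)) atTop :=
        limsup_le_limsup (Eventually.of_forall fun j => le_of_lt (hφlt j))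
      rw [hCs2.limsup_eq] at h1
      exact h1
    have hlif_sub : L ≤ liminf (m ∘ φ) atTop := hsub_liminf m φ hφ.tendsto_atTop
    have htend : Tendsto (m ∘ φ) atTop (nhds L) :=
      tendsto_of_le_liminf_of_limsup_le hlif_sub hls_sub
    obtain ⟨z, ms, hms, hwz⟩ := hextract φ hφ
    have hz1 : F z ≤ L := by
      have h1 := hcore (φ ∘ ms) (hφ.comp hms) z hwz
      have h2 : Tendsto (m ∘ (φ ∘ ms)) atTop (nhds L) := htend.comp hms.tendsto_atTop
      rw [h2.liminf_eq] at h1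
      exact h1
    have hFzL : F z = L := le_antisymm hz1 (le_trans liminf_le_limsup (hA z))
    have hls_eq : limsup m atTop = L := le_antisymm (le_trans (hA z) hz1) liminf_le_limsup
    have hminF : ∀ y, F z ≤ F y := by
      intro y
      rw [hFzL, ← hls_eq]
      exact hA y
    have hFzne : F z ≠ ⊤ := ne_top_of_le_ne_top hy₀ (hminF y₀)
    have htm : Tendsto m atTop (nhds (F z)) := by
      refine tendsto_of_liminf_eq_limsup ?_ ?_
      · rw [hFzL]
      · rw [hFzL]; exact hls_eq
    have hclus : ∀ z' : X, (∃ φ' : ℕ → ℕ, StrictMono φ' ∧ WeakConv (xh ∘ φ') z') →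
        ∀ y, F z' ≤ F y := by
      rintro z' ⟨φ', hφ', hw'⟩ y
      have h1 := hcore φ' hφ' z' hw'
      have h2 : Tendsto (m ∘ φ') atTop (nhds (F z)) := htm.comp hφ'.tendsto_atTop
      rw [h2.liminf_eq] at h1
      exact le_trans h1 (hminF y)
    refine ⟨z, hminF, hFzne, htm, hclus, ⟨z, φ ∘ ms, hφ.comp hms, hwz⟩, ?_⟩
    rintro xhat ⟨hxhat_min, hxhat_uniq⟩ f
    apply tendsto_of_subseq_tendsto
    intro ns hns
    obtain ⟨ms₁, hms₁, hcomp⟩ := strictMono_subseq_of_tendsto_atTop hns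
    obtain ⟨z', ms₂, hms₂, hwz'⟩ := hextract (ns ∘ ms₁) hcomp
    have hz'eq : z' = xhat :=
      hxhat_uniq z' (hclus z' ⟨(ns ∘ ms₁) ∘ ms₂, hcomp.comp hms₂, hwz'⟩)
    refine ⟨fun k => ms₁ (ms₂ k), ?_⟩
    have := hwz' f
    rw [hz'eq] at this
    exact this
end
end
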